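/- arXiv:1807.09189 — 7 statements merged into one kernel-verified Lean document; each statement's English description precedes it below -/
import Mathlib

section
/- Let N ≥ 1, λ > 0, and let μ be a probability measure on ℝ^N. Then for any a ∈ ℝ^N and r > 0, I_λ[μ] ≥ 2^{1−(λ−1)₊} μ(B_r(a)) ( ∫_{ℝ^N} |y−a|^λ dμ(y) − 2^{(λ−1)₊} r^λ ), where I_λ[μ] = ∬ |x−y|^λ dμ(x)dμ(y) and (λ−1)₊ = max{λ−1, 0}. -/
/-!
Write `K = 2 ^ (p - 1)₊`, `B = B_ρ(a)` and `g y = d(y, a) ^ p`. For `x ∈ B` the triangle inequality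
and `(s + t) ^ p ≤ K (s ^ p + t ^ p)` give `g y ≤ K (d(x, y) ^ p + ρ ^ p)`. Symmetrizing in `(x, y)`
(and using `g ≤ ρ ^ p ≤ K ρ ^ p` on `B × B`) gives the pointwise bound
`1_B(x) g(y) + 1_B(y) g(x) ≤ K d(x, y) ^ p + K ρ ^ p (1_B(x) + 1_B(y))`,
whose double integral against a probability measure is `2 μ(B) ∫ g ≤ K I_p[μ] + 2 K ρ ^ p μ(B)`.
Since `2 / K = 2 ^ (1 - (p - 1)₊)`, this is the claim.
-/

open MeasureTheory Set
open scoped ENNReal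

theorem ENNReal.rpow_add_le_two_rpow_max_mul_add_rpow (x y : ℝ≥0∞) {p : ℝ} (hp : 0 ≤ p) :
    (x + y) ^ p ≤ 2 ^ max (p - 1) 0 * (x ^ p + y ^ p) := by
  rcases le_total p 1 with hp1 | hp1
  · rw [max_eq_right (by linarith), rpow_zero, one_mul]
    exact rpow_add_le_add_rpow x y hp hp1
  · rw [max_eq_left (by linarith)]
    exact rpow_add_le_mul_rpow_add_rpow x y hp1

section

variable {E : Type*} [PseudoEMetricSpace E] {p : ℝ}

theorem edist_rpow_le_of_mem_eball (hp : 0 ≤ p) {a x : E} {ρ : ℝ≥0∞} (hx : x ∈ Metric.eball a ρ)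
    (y : E) : edist y a ^ p ≤ 2 ^ max (p - 1) 0 * (edist x y ^ p + ρ ^ p) := by
  calc edist y a ^ p ≤ (edist x y + ρ) ^ p :=
        ENNReal.rpow_le_rpow ((edist_triangle_left y a x).trans
          (add_le_add_right (Metric.mem_eball.1 hx).le _)) hp
    _ ≤ _ := ENNReal.rpow_add_le_two_rpow_max_mul_add_rpow _ _ hp

theorem indicator_mul_edist_rpow_add_le (hp : 0 ≤ p) (a : E) (ρ : ℝ≥0∞) (x y : E) :
    (Metric.eball a ρ).indicator 1 x * edist y a ^ p
        + (Metric.eball a ρ).indicator 1 y * edist x a ^ p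
      ≤ 2 ^ max (p - 1) 0 * edist x y ^ p
        + 2 ^ max (p - 1) 0 * ρ ^ p
          * ((Metric.eball a ρ).indicator 1 x + (Metric.eball a ρ).indicator 1 y) := by
  set K : ℝ≥0∞ := 2 ^ max (p - 1) 0
  have hK : 1 ≤ K := by
    simpa using ENNReal.rpow_le_rpow_of_exponent_le one_le_two (le_max_right (p - 1) 0)
  have hball : ∀ {z}, z ∈ Metric.eball a ρ → edist z a ^ p ≤ K * ρ ^ p := fun hz =>
    (ENNReal.rpow_le_rpow (Metric.mem_eball.1 hz).le hp).trans (le_mul_of_one_le_left' hK)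
  by_cases hx : x ∈ Metric.eball a ρ <;> by_cases hy : y ∈ Metric.eball a ρ <;>
    simp only [indicator_of_mem, indicator_of_notMem, hx, hy, not_false_eq_true, Pi.one_apply,
      one_mul, zero_mul, add_zero, zero_add, mul_one]
  · calc edist y a ^ p + edist x a ^ p ≤ K * ρ ^ p + K * ρ ^ p := add_le_add (hball hy) (hball hx)
      _ ≤ _ := by rw [mul_add, mul_one]; exact le_add_self
  · simpa only [mul_add] using edist_rpow_le_of_mem_eball hp hx y
  · simpa only [mul_add, edist_comm y x] using edist_rpow_le_of_mem_eball hp hy x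
  · exact zero_le

end

section

variable {E : Type*} [PseudoEMetricSpace E] [MeasurableSpace E] [OpensMeasurableSpace E]
  (μ : Measure E) [IsProbabilityMeasure μ] {p : ℝ}

theorem two_mul_measure_eball_mul_lintegral_edist_rpow_le (hp : 0 ≤ p) (a : E) (ρ : ℝ≥0∞) :
    2 * (μ (Metric.eball a ρ) * ∫⁻ y, edist y a ^ p ∂μ)
      ≤ 2 ^ max (p - 1) 0 * ∫⁻ x, ∫⁻ y, edist x y ^ p ∂μ ∂μ
        + 2 * (μ (Metric.eball a ρ) * (2 ^ max (p - 1) 0 * ρ ^ p)) := by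
  set B := Metric.eball a ρ
  set K : ℝ≥0∞ := 2 ^ max (p - 1) 0
  have hK : K ≠ ∞ := ENNReal.rpow_ne_top_of_nonneg (le_max_right _ _) ENNReal.ofNat_ne_top
  have hB : MeasurableSet B := Metric.isOpen_eball.measurableSet
  have hind : Measurable (B.indicator (1 : E → ℝ≥0∞)) := measurable_one.indicator hB
  have hg : Measurable fun z => edist z a ^ p :=
    (continuous_id.edist continuous_const).measurable.pow_const p
  calc 2 * (μ B * ∫⁻ y, edist y a ^ p ∂μ)
      = ∫⁻ x, ∫⁻ y, B.indicator 1 x * edist y a ^ p + B.indicator 1 y * edist x a ^ p ∂μ ∂μ := by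
        simp only [lintegral_add_left (hg.const_mul _), lintegral_const_mul _ hg,
          lintegral_mul_const _ hind, lintegral_indicator_one hB]
        rw [lintegral_add_left (hind.mul_const _), lintegral_mul_const _ hind,
          lintegral_indicator_one hB, lintegral_const_mul _ hg]
        ring
    _ ≤ ∫⁻ x, ∫⁻ y, K * edist x y ^ p + K * ρ ^ p * (B.indicator 1 x + B.indicator 1 y) ∂μ ∂μ :=
        lintegral_mono fun x => lintegral_mono fun y => indicator_mul_edist_rpow_add_le hp a ρ x y
    _ = K * ∫⁻ x, ∫⁻ y, edist x y ^ p ∂μ ∂μ + 2 * (μ B * (K * ρ ^ p)) := by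
        have inner : ∀ x,
            ∫⁻ y, K * edist x y ^ p + K * ρ ^ p * (B.indicator 1 x + B.indicator 1 y) ∂μ
              = K * ∫⁻ y, edist x y ^ p ∂μ + K * ρ ^ p * (B.indicator 1 x + μ B) := fun x => by
          rw [lintegral_add_right _ (by fun_prop),
            lintegral_const_mul' _ _ hK, lintegral_const_mul _ (by fun_prop),
            lintegral_add_right _ hind, lintegral_const, lintegral_indicator_one hB, measure_univ,
            mul_one]
        simp_rw [inner]
        rw [lintegral_add_right _ (by fun_prop), lintegral_const_mul' _ _ hK,
          lintegral_const_mul _ (by fun_prop), lintegral_add_left hind, lintegral_const,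
          lintegral_indicator_one hB, measure_univ]
        ring

theorem two_rpow_mul_measure_eball_mul_sub_le_lintegral_lintegral (hp : 0 ≤ p) (a : E)
    (ρ : ℝ≥0∞) :
    2 ^ (1 - max (p - 1) 0) * μ (Metric.eball a ρ)
        * (∫⁻ y, edist y a ^ p ∂μ - 2 ^ max (p - 1) 0 * ρ ^ p)
      ≤ ∫⁻ x, ∫⁻ y, edist x y ^ p ∂μ ∂μ := by
  set c := max (p - 1) 0
  set m := μ (Metric.eball a ρ)
  have hK0 : (2 : ℝ≥0∞) ^ c ≠ 0 := by simp [ENNReal.rpow_eq_zero_iff]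
  have hK : (2 : ℝ≥0∞) ^ c ≠ ∞ :=
    ENNReal.rpow_ne_top_of_nonneg (le_max_right _ _) ENNReal.ofNat_ne_top
  have h2m : 2 * m ≠ ∞ := ENNReal.mul_ne_top ENNReal.ofNat_ne_top (measure_ne_top μ _)
  have hK2 : (2 : ℝ≥0∞) ^ c * 2 ^ (1 - c) = 2 := by
    rw [← ENNReal.rpow_add _ _ two_ne_zero ENNReal.ofNat_ne_top, add_sub_cancel, ENNReal.rpow_one]
  rw [← ENNReal.mul_le_mul_iff_right hK0 hK]
  calc 2 ^ c * (2 ^ (1 - c) * m * (∫⁻ y, edist y a ^ p ∂μ - 2 ^ c * ρ ^ p))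
      = 2 * m * ∫⁻ y, edist y a ^ p ∂μ - 2 * m * (2 ^ c * ρ ^ p) := by
        rw [← mul_assoc, ← mul_assoc, hK2, ENNReal.mul_sub fun _ _ => h2m]
    _ ≤ 2 ^ c * ∫⁻ x, ∫⁻ y, edist x y ^ p ∂μ ∂μ := by
        rw [tsub_le_iff_right, mul_assoc, mul_assoc]
        exact two_mul_measure_eball_mul_lintegral_edist_rpow_le μ hp a ρ

end

theorem stmt_3_general (N : ℕ) (l : ℝ) (hl : 0 < l)
    (μ : Measure (EuclideanSpace ℝ (Fin N))) [IsProbabilityMeasure μ]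
    (a : EuclideanSpace ℝ (Fin N)) (r : ℝ) (hr : 0 < r) :
    ENNReal.ofReal (2 ^ (1 - max (l - 1) 0)) * μ (Metric.ball a r) *
      ((∫⁻ y, ENNReal.ofReal (‖y - a‖ ^ l) ∂μ)
        - ENNReal.ofReal (2 ^ (max (l - 1) 0) * r ^ l))
      ≤ ∫⁻ x, ∫⁻ y, ENNReal.ofReal (‖x - y‖ ^ l) ∂μ ∂μ := by
  have hedist : ∀ x y : EuclideanSpace ℝ (Fin N), ENNReal.ofReal (‖x - y‖ ^ l) = edist x y ^ l :=
    fun x y => by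
      rw [edist_dist, dist_eq_norm, ENNReal.ofReal_rpow_of_nonneg (norm_nonneg _) hl.le]
  have htwo : ∀ s : ℝ, ENNReal.ofReal (2 ^ s) = 2 ^ s := fun s => by
    rw [← ENNReal.ofReal_rpow_of_pos two_pos, ENNReal.ofReal_ofNat]
  simp_rw [hedist, ENNReal.ofReal_mul (by positivity : (0 : ℝ) ≤ 2 ^ max (l - 1) 0), htwo,
    ← ENNReal.ofReal_rpow_of_nonneg hr.le hl.le, ← Metric.eball_ofReal]
  exact two_rpow_mul_measure_eball_mul_sub_le_lintegral_lintegral μ hl.le a _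

theorem stmt_3 (N : ℕ) (hN : 1 ≤ N) (l : ℝ) (hl : 0 < l)
    (μ : Measure (EuclideanSpace ℝ (Fin N))) [IsProbabilityMeasure μ]
    (a : EuclideanSpace ℝ (Fin N)) (r : ℝ) (hr : 0 < r) :
    ENNReal.ofReal (2 ^ (1 - max (l - 1) 0)) * μ (Metric.ball a r) *
      ((∫⁻ y, ENNReal.ofReal (‖y - a‖ ^ l) ∂μ)
        - ENNReal.ofReal (2 ^ (max (l - 1) 0) * r ^ l))
      ≤ ∫⁻ x, ∫⁻ y, ENNReal.ofReal (‖x - y‖ ^ l) ∂μ ∂μ :=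
  stmt_3_general N l hl μ a r hr
end

section
/- Let ρ : ℝ^N → [0,∞) be a radially symmetric non-increasing integrable function. Then for every x ∈ ℝ^N, ∫_{ℝ^N} |x − y|^λ ρ(y) dy ≥ ∫_{ℝ^N} |y|^λ ρ(y) dy, for any λ > 0. Consequently I_λ[ρ] := ∬ |x−y|^λ ρ(x)ρ(y) dx dy ≥ (∫ |y|^λ ρ(y) dy)(∫ ρ dx). -/
/-!
Write `ν` for the measure with density `ρ`. By the layer-cake formula,
`∫ |x - y|^λ ρ(y) dy = ∫₀^∞ ν(B(x, t^{1/λ})ᶜ) dt`, so it suffices to show that `ν` gives the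
centred ball the most mass: `ν(B(x, r)) ≤ ν(B(0, r))`. Slicing `ρ` once more, this reduces to
`|{ρ > s} ∩ B(x, r)| ≤ |{ρ > s} ∩ B(0, r)|`, which holds because the superlevel set `{ρ > s}`
either contains `B(0, r)` or is contained in it, and `|B(x, r)| = |B(0, r)|`. The finiteness
of `ν` on balls, needed to pass to complements, comes from `ρ ≤ ρ 0`. The bound on the double
integral follows by integrating the pointwise bound against `ρ(x) dx`.
-/

open MeasureTheory Metric Set ENNReal

theorem ofReal_integral_le_lintegral_ofReal {α : Type*} [MeasurableSpace α] {μ : Measure α}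
    {f : α → ℝ} (hf : 0 ≤ᵐ[μ] f) :
    ENNReal.ofReal (∫ x, f x ∂μ) ≤ ∫⁻ x, ENNReal.ofReal (f x) ∂μ := by
  by_cases hfi : Integrable f μ
  · exact (ofReal_integral_eq_lintegral_ofReal hfi hf).le
  · simp [integral_undef hfi]

section RadiallyNonincreasing

variable {E : Type*} [NormedAddCommGroup E] {ρ : E → ℝ}

theorem measurable_of_norm_antitone [MeasurableSpace E] [OpensMeasurableSpace E]
    (hρ : ∀ x y : E, ‖x‖ ≤ ‖y‖ → ρ y ≤ ρ x) : Measurable ρ := by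
  refine measurable_of_Ioi fun s => ?_
  have : ρ ⁻¹' Ioi s = norm ⁻¹' lowerClosure (norm '' (ρ ⁻¹' Ioi s)) := by
    refine Subset.antisymm (fun z hz => ⟨‖z‖, mem_image_of_mem _ hz, le_rfl⟩) ?_
    rintro z ⟨_, ⟨y, hy, rfl⟩, hzy⟩
    exact lt_of_lt_of_le hy (hρ z y hzy)
  rw [this]
  exact measurable_norm (lowerClosure _).lower.ordConnected.measurableSet

theorem superlevel_subset_closedBall_or_closedBall_subset
    (hρ : ∀ x y : E, ‖x‖ ≤ ‖y‖ → ρ y ≤ ρ x) (s r : ℝ) :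
    {y | s < ρ y} ⊆ closedBall 0 r ∨ closedBall 0 r ⊆ {y | s < ρ y} := by
  by_cases h : ∃ y, s < ρ y ∧ r < ‖y‖
  · obtain ⟨y, hy, hry⟩ := h
    refine Or.inr fun z hz => hy.trans_le (hρ z y ?_)
    exact (mem_closedBall_zero_iff.1 hz).trans hry.le
  · simp only [not_exists, not_and, not_lt] at h
    exact Or.inl fun z hz => mem_closedBall_zero_iff.2 (h z hz)

theorem setOf_lt_rpow_norm_sub_eq_compl_closedBall {l t : ℝ} (hl : 0 < l) (ht : 0 ≤ t) (z : E) :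
    {y | t < ‖z - y‖ ^ l} = (closedBall z (t ^ l⁻¹))ᶜ := by
  ext y
  rw [mem_compl_iff, mem_closedBall, dist_comm, dist_eq_norm, not_le]
  exact (Real.rpow_inv_lt_iff_of_pos ht (norm_nonneg _) hl).symm

variable [MeasurableSpace E] [BorelSpace E] (μ : Measure E)

theorem lintegral_rpow_norm_sub_mul_eq {l : ℝ} (hl : 0 < l)
    (hρ : ∀ x y : E, ‖x‖ ≤ ‖y‖ → ρ y ≤ ρ x) (z : E) :
    ∫⁻ y, ENNReal.ofReal (‖z - y‖ ^ l * ρ y) ∂μ =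
      ∫⁻ t in Ioi 0, μ.withDensity (fun y => ENNReal.ofReal (ρ y)) (closedBall z (t ^ l⁻¹))ᶜ := by
  have hm : Measurable fun y => ‖z - y‖ ^ l := by fun_prop
  have hnn : ∀ y, 0 ≤ ‖z - y‖ ^ l := fun y => Real.rpow_nonneg (norm_nonneg _) l
  calc ∫⁻ y, ENNReal.ofReal (‖z - y‖ ^ l * ρ y) ∂μ
      = ∫⁻ y, ENNReal.ofReal (‖z - y‖ ^ l) ∂μ.withDensity (fun y => ENNReal.ofReal (ρ y)) := by
        rw [lintegral_withDensity_eq_lintegral_mul _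
          (measurable_of_norm_antitone hρ).ennreal_ofReal hm.ennreal_ofReal]
        refine lintegral_congr fun y => ?_
        rw [Pi.mul_apply, ofReal_mul (hnn y), mul_comm]
    _ = ∫⁻ t in Ioi 0, μ.withDensity (fun y => ENNReal.ofReal (ρ y)) {y | t < ‖z - y‖ ^ l} :=
        lintegral_eq_lintegral_meas_lt _ (ae_of_all _ hnn) hm.aemeasurable
    _ = _ := setLIntegral_congr_fun measurableSet_Ioi fun t ht => by
        rw [setOf_lt_rpow_norm_sub_eq_compl_closedBall hl (le_of_lt ht)]

variable [μ.IsAddHaarMeasure]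

theorem measure_superlevel_inter_closedBall_le (hρ : ∀ x y : E, ‖x‖ ≤ ‖y‖ → ρ y ≤ ρ x)
    (s r : ℝ) (x : E) :
    μ ({y | s < ρ y} ∩ closedBall x r) ≤ μ ({y | s < ρ y} ∩ closedBall 0 r) := by
  rcases superlevel_subset_closedBall_or_closedBall_subset hρ s r with h | h
  · rw [inter_eq_left.2 h]
    exact measure_mono inter_subset_left
  · rw [inter_eq_right.2 h, ← Measure.addHaar_closedBall_center μ x]
    exact measure_mono inter_subset_right

theorem withDensity_closedBall_le (hρ₀ : ∀ y, 0 ≤ ρ y)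
    (hρ : ∀ x y : E, ‖x‖ ≤ ‖y‖ → ρ y ≤ ρ x) (x : E) (r : ℝ) :
    μ.withDensity (fun y => ENNReal.ofReal (ρ y)) (closedBall x r) ≤
      μ.withDensity (fun y => ENNReal.ofReal (ρ y)) (closedBall 0 r) := by
  have hm := measurable_of_norm_antitone hρ
  simp only [withDensity_apply _ measurableSet_closedBall]
  rw [lintegral_eq_lintegral_meas_lt _ (ae_of_all _ hρ₀) hm.aemeasurable,
    lintegral_eq_lintegral_meas_lt _ (ae_of_all _ hρ₀) hm.aemeasurable]
  refine lintegral_mono fun s => ?_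
  simp only [Measure.restrict_apply (measurableSet_lt measurable_const hm)]
  exact measure_superlevel_inter_closedBall_le μ hρ s r x

theorem withDensity_closedBall_ne_top [ProperSpace E]
    (hρ : ∀ x y : E, ‖x‖ ≤ ‖y‖ → ρ y ≤ ρ x) (r : ℝ) :
    μ.withDensity (fun y => ENNReal.ofReal (ρ y)) (closedBall 0 r) ≠ ∞ := by
  rw [withDensity_apply _ measurableSet_closedBall]
  have hbound : ∫⁻ y in closedBall 0 r, ENNReal.ofReal (ρ y) ∂μ ≤
      ENNReal.ofReal (ρ 0) * μ (closedBall 0 r) := by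
    rw [← setLIntegral_const]
    exact lintegral_mono fun y => ofReal_le_ofReal (hρ 0 y (by simp))
  exact ne_top_of_le_ne_top (mul_ne_top ofReal_ne_top measure_closedBall_lt_top.ne) hbound

theorem withDensity_compl_closedBall_le [ProperSpace E] (hρ₀ : ∀ y, 0 ≤ ρ y)
    (hρ : ∀ x y : E, ‖x‖ ≤ ‖y‖ → ρ y ≤ ρ x) (x : E) (r : ℝ) :
    μ.withDensity (fun y => ENNReal.ofReal (ρ y)) (closedBall 0 r)ᶜ ≤
      μ.withDensity (fun y => ENNReal.ofReal (ρ y)) (closedBall x r)ᶜ := by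
  have hball := withDensity_closedBall_le μ hρ₀ hρ x r
  have hfin := withDensity_closedBall_ne_top μ hρ r
  rw [measure_compl measurableSet_closedBall hfin,
    measure_compl measurableSet_closedBall (ne_top_of_le_ne_top hfin hball)]
  exact tsub_le_tsub_left hball _

theorem lintegral_rpow_norm_mul_le_lintegral_rpow_norm_sub_mul [ProperSpace E] {l : ℝ}
    (hl : 0 < l) (hρ₀ : ∀ y, 0 ≤ ρ y) (hρ : ∀ x y : E, ‖x‖ ≤ ‖y‖ → ρ y ≤ ρ x) (x : E) :
    ∫⁻ y, ENNReal.ofReal (‖y‖ ^ l * ρ y) ∂μ ≤ ∫⁻ y, ENNReal.ofReal (‖x - y‖ ^ l * ρ y) ∂μ := by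
  have h₀ := lintegral_rpow_norm_sub_mul_eq μ hl hρ 0
  simp only [zero_sub, norm_neg] at h₀
  rw [h₀, lintegral_rpow_norm_sub_mul_eq μ hl hρ x]
  exact lintegral_mono fun t => withDensity_compl_closedBall_le μ hρ₀ hρ x (t ^ l⁻¹)

end RadiallyNonincreasing

theorem stmt_5_general (N : ℕ) (l : ℝ) (hl : 0 < l)
    (ρ : EuclideanSpace ℝ (Fin N) → ℝ) (hρ : ∀ x, 0 ≤ ρ x)
    (hsym : ∀ x y : EuclideanSpace ℝ (Fin N), ‖x‖ ≤ ‖y‖ → ρ y ≤ ρ x) :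
    (∀ x : EuclideanSpace ℝ (Fin N),
      (∫⁻ y, ENNReal.ofReal (‖y‖ ^ l * ρ y)) ≤
        ∫⁻ y, ENNReal.ofReal (‖x - y‖ ^ l * ρ y)) ∧
    (∫⁻ y, ENNReal.ofReal (‖y‖ ^ l * ρ y)) * ENNReal.ofReal (∫ x, ρ x) ≤
      ∫⁻ x, ∫⁻ y, ENNReal.ofReal (‖x - y‖ ^ l * ρ x * ρ y) := by
  have hshift := lintegral_rpow_norm_mul_le_lintegral_rpow_norm_sub_mul volume hl hρ hsym
  refine ⟨hshift, ?_⟩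
  calc (∫⁻ y, ENNReal.ofReal (‖y‖ ^ l * ρ y)) * ENNReal.ofReal (∫ x, ρ x)
      ≤ (∫⁻ y, ENNReal.ofReal (‖y‖ ^ l * ρ y)) * ∫⁻ x, ENNReal.ofReal (ρ x) := by
        gcongr
        exact ofReal_integral_le_lintegral_ofReal (ae_of_all _ hρ)
    _ = ∫⁻ x, ENNReal.ofReal (ρ x) * ∫⁻ y, ENNReal.ofReal (‖y‖ ^ l * ρ y) := by
        rw [mul_comm, lintegral_mul_const _ (measurable_of_norm_antitone hsym).ennreal_ofReal]
    _ ≤ ∫⁻ x, ENNReal.ofReal (ρ x) * ∫⁻ y, ENNReal.ofReal (‖x - y‖ ^ l * ρ y) :=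
        lintegral_mono fun x => mul_le_mul_right (hshift x) _
    _ = ∫⁻ x, ∫⁻ y, ENNReal.ofReal (‖x - y‖ ^ l * ρ x * ρ y) := by
        refine lintegral_congr fun x => ?_
        rw [← lintegral_const_mul' _ _ ofReal_ne_top]
        refine lintegral_congr fun y => ?_
        rw [← ofReal_mul (hρ x), mul_left_comm, mul_assoc]

theorem stmt_5 (N : ℕ) (hN : 1 ≤ N) (l : ℝ) (hl : 0 < l)
    (ρ : EuclideanSpace ℝ (Fin N) → ℝ) (hρ : ∀ x, 0 ≤ ρ x)
    (hint : Integrable ρ)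
    (hsym : ∀ x y : EuclideanSpace ℝ (Fin N), ‖x‖ ≤ ‖y‖ → ρ y ≤ ρ x) :
    (∀ x : EuclideanSpace ℝ (Fin N),
      (∫⁻ y, ENNReal.ofReal (‖y‖ ^ l * ρ y)) ≤
        ∫⁻ y, ENNReal.ofReal (‖x - y‖ ^ l * ρ y)) ∧
    (∫⁻ y, ENNReal.ofReal (‖y‖ ^ l * ρ y)) * ENNReal.ofReal (∫ x, ρ x) ≤
      ∫⁻ x, ∫⁻ y, ENNReal.ofReal (‖x - y‖ ^ l * ρ x * ρ y) :=
  stmt_5_general N l hl ρ hρ hsym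
end

section
/- Carlson–Levin type inequality: let λ > 0 and N/(N+λ) < q < 1. There is a constant c > 0, depending only on N, λ, q, such that for every nonnegative measurable ρ on ℝ^N, (∫_{ℝ^N} ρ dx)^{1 − N(1−q)/(λq)} (∫_{ℝ^N} |x|^λ ρ(x) dx)^{N(1−q)/(λq)} ≥ c (∫_{ℝ^N} ρ^q dx)^{1/q}. -/
/-!
Hölder's inequality with exponents `1/q` and `1/(1-q)`, applied to `ρ^q = (ρ w)^q · w^(-q)`, gives
`∫ ρ^q ≤ (∫ ρ w)^q (∫ w^(-q/(1-q)))^(1-q)` for every positive weight `w`. Take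
`w = 1/A + |x|^λ/B` with `A = ∫ ρ` and `B = ∫ |x|^λ ρ`: then `∫ ρ w = 2`, and the substitution
`x ↦ (B/A)^(1/λ) x` turns `∫ w^(-q/(1-q))` into `A^(q/(1-q)) (B/A)^(N/λ) ∫ (1 + |x|^λ)^(-q/(1-q))`,
which is finite because `λq/(1-q) > N`. Raising to the power `1/q` gives the inequality with
`1/c = 2 (∫ (1 + |x|^λ)^(-q/(1-q)))^((1-q)/q)`. If `ρ = 0` a.e., or `A` or `B` is infinite,
the inequality is trivial.
-/

open MeasureTheory Module
open scoped ENNReal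

theorem one_add_rpow_le_two_rpow_mul {a l : ℝ} (ha : 0 ≤ a) (hl : 0 ≤ l) :
    (1 + a) ^ l ≤ 2 ^ l * (1 + a ^ l) := calc
  (1 + a) ^ l ≤ (2 * max 1 a) ^ l :=
    Real.rpow_le_rpow (by positivity) (by linarith [le_max_left 1 a, le_max_right 1 a]) hl
  _ = 2 ^ l * max 1 a ^ l := Real.mul_rpow zero_le_two (by positivity)
  _ ≤ 2 ^ l * (1 + a ^ l) := by
    gcongr
    rcases max_choice 1 a with h | h <;> rw [h]
    · linarith [Real.one_rpow l, Real.rpow_nonneg ha l]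
    · linarith

theorem one_add_rpow_rpow_neg_le {a l s : ℝ} (ha : 0 ≤ a) (hl : 0 ≤ l) (hs : 0 ≤ s) :
    (1 + a ^ l) ^ (-s) ≤ 2 ^ (l * s) * (1 + a) ^ (-(l * s)) := by
  rw [Real.rpow_neg (by positivity), Real.rpow_neg (by positivity), ← div_eq_mul_inv,
    le_div_iff₀ (by positivity), inv_mul_le_iff₀ (by positivity), Real.rpow_mul (by positivity),
    Real.rpow_mul zero_le_two, ← Real.mul_rpow (by positivity) (by positivity)]
  exact Real.rpow_le_rpow (by positivity)
    ((one_add_rpow_le_two_rpow_mul ha hl).trans_eq (mul_comm _ _)) hs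

theorem rpow_mul_div_rpow_rpow_of_mul_eq_one {α β a b e : ℝ} (hα : 0 < α) (hβ : 0 < β)
    (hae : a * e = 1) :
    (α ^ a * (β / α) ^ b) ^ e = α ^ (1 - b * e) * β ^ (b * e) := by
  rw [Real.mul_rpow (by positivity) (by positivity), ← Real.rpow_mul hα.le, hae, Real.rpow_one,
    ← Real.rpow_mul (by positivity), Real.div_rpow hβ.le hα.le, Real.rpow_sub hα, Real.rpow_one]
  ring

theorem rpow_sub_mul_rpow_eq_top {a b : ℝ≥0∞} (hab : a = ∞ ∨ b = ∞) (ha : a ≠ 0) (hb : b ≠ 0)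
    {θ : ℝ} (hθ0 : 0 < θ) (hθ1 : θ < 1) : a ^ (1 - θ) * b ^ θ = ∞ := by
  rcases hab with rfl | rfl
  · simp [ENNReal.rpow_eq_zero_iff, hb, hθ0.not_gt, hθ1]
  · simp [ENNReal.rpow_eq_zero_iff, ha, hθ0, hθ1.not_gt]

theorem lintegral_ne_zero_of_forall_ne_zero {α : Type*} [MeasurableSpace α] {μ : Measure α}
    [NeZero μ] {f : α → ℝ≥0∞} (hf : Measurable f) (h : ∀ x, f x ≠ 0) : ∫⁻ x, f x ∂μ ≠ 0 := by
  rw [← pos_iff_ne_zero, lintegral_pos_iff_support hf, Function.support_eq_univ h]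
  exact NeZero.pos _

theorem lintegral_rpow_le_lintegral_mul_rpow_mul_lintegral_rpow_neg {α : Type*}
    [MeasurableSpace α] {μ : Measure α} {q : ℝ} (hq0 : 0 < q) (hq1 : q < 1)
    {f w : α → ℝ≥0∞} (hf : AEMeasurable f μ) (hw : AEMeasurable w μ)
    (hw0 : ∀ x, w x ≠ 0) (hwt : ∀ x, w x ≠ ∞) :
    ∫⁻ x, f x ^ q ∂μ ≤
      (∫⁻ x, f x * w x ∂μ) ^ q * (∫⁻ x, w x ^ (-(q / (1 - q))) ∂μ) ^ (1 - q) := by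
  have hsplit : ∀ x, f x ^ q = (f x * w x) ^ q * (w x ^ (-(q / (1 - q)))) ^ (1 - q) := by
    intro x
    rw [ENNReal.mul_rpow_of_nonneg _ _ hq0.le, ← ENNReal.rpow_mul, mul_assoc,
      ← ENNReal.rpow_add _ _ (hw0 x) (hwt x), neg_mul, div_mul_cancel₀ _ (sub_ne_zero.2 hq1.ne'),
      add_neg_cancel, ENNReal.rpow_zero, mul_one]
  simp only [hsplit]
  exact ENNReal.lintegral_mul_norm_pow_le (hf.mul hw) (hw.pow_const _) hq0.le (by linarith)
    (by ring)

theorem ae_eq_zero_of_lintegral_norm_rpow_mul_eq_zero {E : Type*} [NormedAddCommGroup E]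
    [MeasurableSpace E] [OpensMeasurableSpace E] {μ : Measure E} [NullSingletonClass μ]
    {f : E → ℝ≥0∞} (hf : AEMeasurable f μ) {l : ℝ}
    (h : ∫⁻ x, ENNReal.ofReal (‖x‖ ^ l) * f x ∂μ = 0) :
    f =ᵐ[μ] 0 := by
  filter_upwards [(lintegral_eq_zero_iff' ((by fun_prop : Measurable _).aemeasurable.mul hf)).1 h,
    Measure.ae_ne μ 0] with x hx hx0
  have hpos : 0 < ‖x‖ ^ l := Real.rpow_pos_of_pos (norm_pos_iff.2 hx0) l
  simpa [hpos.not_ge] using hx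

theorem lintegral_one_add_norm_rpow_rpow_ne_zero {E : Type*} [NormedAddCommGroup E]
    [MeasurableSpace E] [OpensMeasurableSpace E] (μ : Measure E) [NeZero μ] (l s : ℝ) :
    ∫⁻ x, ENNReal.ofReal ((1 + ‖x‖ ^ l) ^ s) ∂μ ≠ 0 :=
  lintegral_ne_zero_of_forall_ne_zero (by fun_prop) fun x =>
    (ENNReal.ofReal_pos.2 (by positivity)).ne'

noncomputable def carlsonLevinConst {E : Type*} [NormedAddCommGroup E] [MeasurableSpace E]
    (μ : Measure E) (l q : ℝ) : ℝ≥0∞ :=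
  2 * (∫⁻ x, ENNReal.ofReal ((1 + ‖x‖ ^ l) ^ (-(q / (1 - q)))) ∂μ) ^ ((1 - q) / q)

theorem carlsonLevinConst_ne_zero {E : Type*} [NormedAddCommGroup E] [MeasurableSpace E]
    [OpensMeasurableSpace E] (μ : Measure E) [NeZero μ] {l q : ℝ} (hq0 : 0 < q) (hq1 : q < 1) :
    carlsonLevinConst μ l q ≠ 0 :=
  mul_ne_zero two_ne_zero fun h => lintegral_one_add_norm_rpow_rpow_ne_zero μ l _
    ((ENNReal.rpow_eq_zero_iff_of_pos (div_pos (sub_pos.2 hq1) hq0)).1 h)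

section AddHaar

variable {E : Type*} [NormedAddCommGroup E] [NormedSpace ℝ E] [FiniteDimensional ℝ E]
  [MeasurableSpace E] [BorelSpace E] (μ : Measure E) [μ.IsAddHaarMeasure]

theorem lintegral_comp_smul {f : E → ℝ≥0∞} (hf : Measurable f) {r : ℝ} (hr : r ≠ 0) :
    ∫⁻ x, f (r • x) ∂μ = ENNReal.ofReal |(r ^ finrank ℝ E)⁻¹| * ∫⁻ x, f x ∂μ := by
  rw [← lintegral_map hf (measurable_const_smul r), Measure.map_addHaar_smul μ hr,
    lintegral_smul_measure, smul_eq_mul]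

theorem lintegral_comp_norm_rpow_div {F : ℝ → ℝ≥0∞} (hF : Measurable F) {l t : ℝ}
    (hl : 0 < l) (ht : 0 < t) :
    ∫⁻ x, F (‖x‖ ^ l / t) ∂μ =
      ENNReal.ofReal (t ^ ((finrank ℝ E : ℝ) / l)) * ∫⁻ x, F (‖x‖ ^ l) ∂μ := by
  set r := t ^ (1 / l)
  have hr : 0 < r := by positivity
  have hrl : r ^ l = t := by
    rw [← Real.rpow_mul ht.le, one_div_mul_cancel hl.ne', Real.rpow_one]
  have hrd : r ^ finrank ℝ E = t ^ ((finrank ℝ E : ℝ) / l) := by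
    rw [← Real.rpow_natCast, ← Real.rpow_mul ht.le, one_div_mul_eq_div]
  have hscale : ∫⁻ x, F (‖x‖ ^ l) ∂μ =
      ENNReal.ofReal (r ^ finrank ℝ E)⁻¹ * ∫⁻ x, F (‖x‖ ^ l / t) ∂μ := by
    rw [← abs_of_pos (inv_pos.2 (pow_pos hr _)), ← lintegral_comp_smul μ (by fun_prop) hr.ne']
    congr 1 with y
    rw [norm_smul, Real.norm_of_nonneg hr.le, Real.mul_rpow hr.le (norm_nonneg y), hrl,
      mul_div_cancel_left₀ _ ht.ne']
  rw [hscale, ← mul_assoc, ← ENNReal.ofReal_mul (by positivity), hrd,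
    mul_inv_cancel₀ (by positivity), ENNReal.ofReal_one, one_mul]

theorem lintegral_one_add_norm_rpow_rpow_neg_lt_top {l s : ℝ} (hl : 0 < l)
    (hs : (finrank ℝ E : ℝ) < l * s) :
    ∫⁻ x, ENNReal.ofReal ((1 + ‖x‖ ^ l) ^ (-s)) ∂μ < ∞ := by
  have hs0 : 0 < s := pos_of_mul_pos_right ((Nat.cast_nonneg _).trans_lt hs) hl.le
  calc ∫⁻ x, ENNReal.ofReal ((1 + ‖x‖ ^ l) ^ (-s)) ∂μ
      ≤ ∫⁻ x, ENNReal.ofReal (2 ^ (l * s)) * ENNReal.ofReal ((1 + ‖x‖) ^ (-(l * s))) ∂μ :=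
        lintegral_mono fun x => by
          rw [← ENNReal.ofReal_mul (by positivity)]
          exact ENNReal.ofReal_le_ofReal
            (one_add_rpow_rpow_neg_le (norm_nonneg x) hl.le hs0.le)
    _ = ENNReal.ofReal (2 ^ (l * s)) * ∫⁻ x, ENNReal.ofReal ((1 + ‖x‖) ^ (-(l * s))) ∂μ :=
        lintegral_const_mul' _ _ ENNReal.ofReal_ne_top
    _ < ∞ := ENNReal.mul_lt_top ENNReal.ofReal_lt_top (finite_integral_one_add_norm hs)

theorem carlsonLevinConst_ne_top {l q : ℝ} (hl : 0 < l) (hq1 : q < 1)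
    (hθ : (finrank ℝ E : ℝ) * (1 - q) < l * q) : carlsonLevinConst μ l q ≠ ∞ := by
  have hfin := lintegral_one_add_norm_rpow_rpow_neg_lt_top μ hl (s := q / (1 - q))
    (by rwa [mul_div_assoc', lt_div_iff₀ (by linarith)])
  exact ENNReal.mul_ne_top ENNReal.ofNat_ne_top
    (ENNReal.rpow_ne_top_of_ne_zero (lintegral_one_add_norm_rpow_rpow_ne_zero μ l _) hfin.ne)

theorem lintegral_rpow_le_of_weight_add_norm_rpow {l q α β : ℝ} (hl : 0 < l) (hq0 : 0 < q)
    (hq1 : q < 1) (hα : 0 < α) (hβ : 0 < β) {ρ : E → ℝ≥0∞} (hρ : Measurable ρ) :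
    ∫⁻ x, ρ x ^ q ∂μ ≤
      (ENNReal.ofReal α⁻¹ * ∫⁻ x, ρ x ∂μ +
          ENNReal.ofReal β⁻¹ * ∫⁻ x, ENNReal.ofReal (‖x‖ ^ l) * ρ x ∂μ) ^ q *
        (ENNReal.ofReal (α ^ (q / (1 - q)) * (β / α) ^ ((finrank ℝ E : ℝ) / l)) *
          ∫⁻ x, ENNReal.ofReal ((1 + ‖x‖ ^ l) ^ (-(q / (1 - q)))) ∂μ) ^ (1 - q) := by
  set s := q / (1 - q)
  have hwpos : ∀ x : E, 0 < α⁻¹ + β⁻¹ * ‖x‖ ^ l := fun x => by positivity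
  have hmean : ∫⁻ x, ρ x * ENNReal.ofReal (α⁻¹ + β⁻¹ * ‖x‖ ^ l) ∂μ =
      ENNReal.ofReal α⁻¹ * ∫⁻ x, ρ x ∂μ +
        ENNReal.ofReal β⁻¹ * ∫⁻ x, ENNReal.ofReal (‖x‖ ^ l) * ρ x ∂μ := by
    rw [← lintegral_const_mul' _ _ ENNReal.ofReal_ne_top,
      ← lintegral_const_mul' _ _ ENNReal.ofReal_ne_top, ← lintegral_add_left (by fun_prop)]
    congr 1 with x
    rw [ENNReal.ofReal_add (by positivity) (by positivity), ENNReal.ofReal_mul (by positivity)]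
    ring
  have hweight : ∫⁻ x, ENNReal.ofReal (α⁻¹ + β⁻¹ * ‖x‖ ^ l) ^ (-s) ∂μ =
      ENNReal.ofReal (α ^ s * (β / α) ^ ((finrank ℝ E : ℝ) / l)) *
        ∫⁻ x, ENNReal.ofReal ((1 + ‖x‖ ^ l) ^ (-s)) ∂μ := by
    have hfactor : ∀ x : E, ENNReal.ofReal (α⁻¹ + β⁻¹ * ‖x‖ ^ l) ^ (-s) =
        ENNReal.ofReal (α ^ s) * ENNReal.ofReal ((1 + ‖x‖ ^ l / (β / α)) ^ (-s)) := by
      intro x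
      rw [ENNReal.ofReal_rpow_of_pos (hwpos x), ← ENNReal.ofReal_mul (by positivity),
        show α⁻¹ + β⁻¹ * ‖x‖ ^ l = α⁻¹ * (1 + ‖x‖ ^ l / (β / α)) by field_simp,
        Real.mul_rpow (by positivity) (by positivity), Real.inv_rpow hα.le, Real.rpow_neg hα.le,
        inv_inv]
    simp only [hfactor]
    rw [lintegral_const_mul' _ _ ENNReal.ofReal_ne_top,
      lintegral_comp_norm_rpow_div μ (F := fun u => ENNReal.ofReal ((1 + u) ^ (-s))) (by fun_prop)
        hl (by positivity),
      ← mul_assoc, ← ENNReal.ofReal_mul (by positivity)]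
  rw [← hmean, ← hweight]
  exact lintegral_rpow_le_lintegral_mul_rpow_mul_lintegral_rpow_neg hq0 hq1 hρ.aemeasurable
    (by fun_prop) (fun x => (ENNReal.ofReal_pos.2 (hwpos x)).ne') fun _ => ENNReal.ofReal_ne_top

theorem rpow_lintegral_rpow_le_of_ne_zero_of_ne_top {l q : ℝ} (hl : 0 < l) (hq0 : 0 < q)
    (hq1 : q < 1) {ρ : E → ℝ≥0∞} (hρ : Measurable ρ)
    (hA0 : ∫⁻ x, ρ x ∂μ ≠ 0) (hAt : ∫⁻ x, ρ x ∂μ ≠ ∞)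
    (hB0 : ∫⁻ x, ENNReal.ofReal (‖x‖ ^ l) * ρ x ∂μ ≠ 0)
    (hBt : ∫⁻ x, ENNReal.ofReal (‖x‖ ^ l) * ρ x ∂μ ≠ ∞) :
    (∫⁻ x, ρ x ^ q ∂μ) ^ (1 / q) ≤ carlsonLevinConst μ l q *
      ((∫⁻ x, ρ x ∂μ) ^ (1 - (finrank ℝ E : ℝ) * (1 - q) / (l * q)) *
        (∫⁻ x, ENNReal.ofReal (‖x‖ ^ l) * ρ x ∂μ) ^ ((finrank ℝ E : ℝ) * (1 - q) / (l * q))) := by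
  set A := ∫⁻ x, ρ x ∂μ
  set B := ∫⁻ x, ENNReal.ofReal (‖x‖ ^ l) * ρ x ∂μ
  set C := ∫⁻ x, ENNReal.ofReal ((1 + ‖x‖ ^ l) ^ (-(q / (1 - q)))) ∂μ
  set α := A.toReal
  set β := B.toReal
  have hα : 0 < α := ENNReal.toReal_pos hA0 hAt
  have hβ : 0 < β := ENNReal.toReal_pos hB0 hBt
  have hA : A = ENNReal.ofReal α := (ENNReal.ofReal_toReal hAt).symm
  have hB : B = ENNReal.ofReal β := (ENNReal.ofReal_toReal hBt).symm
  have hnorm : ENNReal.ofReal α⁻¹ * A + ENNReal.ofReal β⁻¹ * B = 2 := by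
    rw [hA, hB, ← ENNReal.ofReal_mul (by positivity), ← ENNReal.ofReal_mul (by positivity),
      inv_mul_cancel₀ hα.ne', inv_mul_cancel₀ hβ.ne', ENNReal.ofReal_one, one_add_one_eq_two]
  have hholder := lintegral_rpow_le_of_weight_add_norm_rpow μ hl hq0 hq1 hα hβ hρ
  rw [hnorm] at hholder
  have h1q : 1 - q ≠ 0 := (sub_pos.2 hq1).ne'
  have he : 0 ≤ (1 - q) / q := div_nonneg (sub_pos.2 hq1).le hq0.le
  have hexp : q / (1 - q) * ((1 - q) / q) = 1 := by field_simp
  calc (∫⁻ x, ρ x ^ q ∂μ) ^ (1 / q)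
      ≤ (2 ^ q * (ENNReal.ofReal (α ^ (q / (1 - q)) * (β / α) ^ ((finrank ℝ E : ℝ) / l)) * C)
          ^ (1 - q)) ^ (1 / q) := ENNReal.rpow_le_rpow hholder (by positivity)
    _ = 2 * C ^ ((1 - q) / q) *
          ENNReal.ofReal
            ((α ^ (q / (1 - q)) * (β / α) ^ ((finrank ℝ E : ℝ) / l)) ^ ((1 - q) / q)) := by
      rw [ENNReal.mul_rpow_of_nonneg _ _ (by positivity), ← ENNReal.rpow_mul,
        mul_one_div_cancel hq0.ne', ENNReal.rpow_one, ← ENNReal.rpow_mul, mul_one_div,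
        ENNReal.mul_rpow_of_nonneg _ _ he, ENNReal.ofReal_rpow_of_nonneg (by positivity) he]
      ring
    _ = _ := by
      rw [rpow_mul_div_rpow_rpow_of_mul_eq_one hα hβ hexp, div_mul_div_comm,
        ENNReal.ofReal_mul (by positivity), ← ENNReal.ofReal_rpow_of_pos hα,
        ← ENNReal.ofReal_rpow_of_pos hβ, ← hA, ← hB]
      rfl

theorem rpow_lintegral_rpow_le [Nontrivial E] {l q : ℝ} (hl : 0 < l) (hq0 : 0 < q)
    (hq1 : q < 1) (hθ : (finrank ℝ E : ℝ) * (1 - q) < l * q) {ρ : E → ℝ≥0∞} (hρ : Measurable ρ) :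
    (∫⁻ x, ρ x ^ q ∂μ) ^ (1 / q) ≤ carlsonLevinConst μ l q *
      ((∫⁻ x, ρ x ∂μ) ^ (1 - (finrank ℝ E : ℝ) * (1 - q) / (l * q)) *
        (∫⁻ x, ENNReal.ofReal (‖x‖ ^ l) * ρ x ∂μ) ^ ((finrank ℝ E : ℝ) * (1 - q) / (l * q))) := by
  by_cases hρ0 : ρ =ᵐ[μ] 0
  · have hq : ∫⁻ x, ρ x ^ q ∂μ = 0 :=
      (lintegral_eq_zero_iff (by fun_prop)).2 <| hρ0.mono fun x hx => by
        simp [hx, ENNReal.zero_rpow_of_pos hq0]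
    rw [hq, ENNReal.zero_rpow_of_pos (by positivity)]
    exact zero_le
  have hA0 : ∫⁻ x, ρ x ∂μ ≠ 0 := fun h => hρ0 ((lintegral_eq_zero_iff hρ).1 h)
  have hB0 : ∫⁻ x, ENNReal.ofReal (‖x‖ ^ l) * ρ x ∂μ ≠ 0 := fun h =>
    hρ0 (ae_eq_zero_of_lintegral_norm_rpow_mul_eq_zero hρ.aemeasurable h)
  by_cases hfin : ∫⁻ x, ρ x ∂μ = ∞ ∨ ∫⁻ x, ENNReal.ofReal (‖x‖ ^ l) * ρ x ∂μ = ∞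
  · have hθ0 : 0 < (finrank ℝ E : ℝ) * (1 - q) / (l * q) := by
      have hd : 0 < finrank ℝ E := finrank_pos
      have h1q : 0 < 1 - q := sub_pos.2 hq1
      positivity
    have hθ1 : (finrank ℝ E : ℝ) * (1 - q) / (l * q) < 1 := (div_lt_one (by positivity)).2 hθ
    rw [rpow_sub_mul_rpow_eq_top hfin hA0 hB0 hθ0 hθ1,
      ENNReal.mul_top (carlsonLevinConst_ne_zero μ hq0 hq1)]
    exact le_top
  rw [not_or] at hfin
  exact rpow_lintegral_rpow_le_of_ne_zero_of_ne_top μ hl hq0 hq1 hρ hA0 hfin.1 hB0 hfin.2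

end AddHaar

theorem stmt_6 (N : ℕ) (hN : 1 ≤ N) (l q : ℝ) (hl : 0 < l)
    (hq1 : q < 1) (hq0 : (N : ℝ) / (N + l) < q) :
    ∃ c : ℝ, 0 < c ∧ ∀ ρ : EuclideanSpace ℝ (Fin N) → ENNReal, Measurable ρ →
      ENNReal.ofReal c * (∫⁻ x, ρ x ^ q) ^ (1 / q) ≤
        (∫⁻ x, ρ x) ^ (1 - (N : ℝ) * (1 - q) / (l * q)) *
          (∫⁻ x, ENNReal.ofReal (‖x‖ ^ l) * ρ x) ^ ((N : ℝ) * (1 - q) / (l * q)) := by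
  have hNl : (0 : ℝ) < N + l := by positivity
  have hq : 0 < q := lt_of_le_of_lt (by positivity) hq0
  have hθ : (finrank ℝ (EuclideanSpace ℝ (Fin N)) : ℝ) * (1 - q) < l * q := by
    rw [finrank_euclideanSpace_fin]
    rw [div_lt_iff₀ hNl] at hq0
    linarith
  have : Nonempty (Fin N) := ⟨⟨0, hN⟩⟩
  set K := carlsonLevinConst (volume : Measure (EuclideanSpace ℝ (Fin N))) l q
  have hK0 : K ≠ 0 := carlsonLevinConst_ne_zero _ hq hq1
  have hKt : K ≠ ∞ := carlsonLevinConst_ne_top _ hl hq1 hθ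
  refine ⟨K.toReal⁻¹, inv_pos.2 (ENNReal.toReal_pos hK0 hKt), fun ρ hρ => ?_⟩
  rw [ENNReal.ofReal_inv_of_pos (ENNReal.toReal_pos hK0 hKt), ENNReal.ofReal_toReal hKt,
    ENNReal.inv_mul_le_iff hK0 hKt]
  simpa only [finrank_euclideanSpace_fin] using rpow_lintegral_rpow_le volume hl hq hq1 hθ hρ
end

section
/- Reverse Hardy–Littlewood–Sobolev inequality (non-sharp form): let λ > 0 and N/(N+λ) < q < 1, and set α = (2N − q(2N+λ))/(N(1−q)). There is a constant C > 0 such that for every nonnegative ρ ∈ L¹(ℝ^N) with ∫ ρ^q dx < ∞, ∬_{ℝ^N×ℝ^N} |x−y|^λ ρ(x)ρ(y) dx dy ≥ C (∫_{ℝ^N} ρ dx)^α (∫_{ℝ^N} ρ^q dx)^{(2−α)/q}. -/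
/-!
Fix `x` and `r > 0` and split `∫ ρ^q` over the ball `B(x, r)` and its complement. On the ball,
Hölder's inequality with exponents `1/q`, `1/(1-q)` gives `∫_B ρ^q ≤ (∫ ρ)^q |B|^(1-q)`. Off the
ball, the same inequality with the weight `|x - y|^λ` gives
`∫_{Bᶜ} ρ^q ≤ (∫ |x - y|^λ ρ(y) dy)^q (∫_{Bᶜ} |x - y|^(-λq/(1-q)) dy)^(1-q)`, and by scaling the
last integral is `r^(N - λq/(1-q))` times a constant, which is finite exactly because
`q > N/(N+λ)`. Choosing `r` so that the ball term is half of `∫ ρ^q` bounds the potential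
`∫ |x - y|^λ ρ(y) dy` from below uniformly in `x`; integrating against `ρ(x)` gives the inequality.
-/

open MeasureTheory Metric Module
open scoped ENNReal

theorem ENNReal.lintegral_rpow_le_lintegral_mul_rpow {α : Type*} [MeasurableSpace α]
    {μ : Measure α} {q : ℝ} (hq0 : 0 < q) (hq1 : q < 1) {f w : α → ℝ≥0∞}
    (hf : AEMeasurable f μ) (hw : AEMeasurable w μ) (hw0 : ∀ᵐ a ∂μ, w a ≠ 0)
    (hwt : ∀ᵐ a ∂μ, w a ≠ ∞) :
    ∫⁻ a, f a ^ q ∂μ ≤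
      (∫⁻ a, w a * f a ∂μ) ^ q * (∫⁻ a, w a ^ (-(q / (1 - q))) ∂μ) ^ (1 - q) := by
  have hpq : (1 / q).HolderConjugate (1 / (1 - q)) := by
    rw [Real.holderConjugate_iff]
    refine ⟨by rw [lt_div_iff₀ hq0]; linarith, by simp⟩
  have hsplit : ∀ᵐ a ∂μ, f a ^ q = (w a * f a) ^ q * w a ^ (-q) := by
    filter_upwards [hw0, hwt] with a h0 ht
    rw [ENNReal.mul_rpow_of_nonneg _ _ hq0.le, mul_right_comm, ← ENNReal.rpow_add _ _ h0 ht,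
      add_neg_cancel, ENNReal.rpow_zero, one_mul]
  calc ∫⁻ a, f a ^ q ∂μ = ∫⁻ a, ((fun a => (w a * f a) ^ q) * fun a => w a ^ (-q)) a ∂μ :=
        lintegral_congr_ae hsplit
    _ ≤ _ := ENNReal.lintegral_mul_le_Lp_mul_Lq μ hpq ((hw.mul hf).pow_const q)
          (hw.pow_const _)
    _ = _ := by
        simp only [one_div_one_div, ← ENNReal.rpow_mul, mul_one_div_cancel hq0.ne',
          ENNReal.rpow_one]
        congr 3 with a
        ring_nf

theorem Real.mul_rpow_le_of_forall_le_add_rpow {a b j u v : ℝ} (ha : 0 < a) (hj : 0 < j)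
    (hu : 0 < u) (h : ∀ r, 0 < r → j ≤ a * r ^ u + b * r ^ (-v)) :
    j / 2 * (j / (2 * a)) ^ (v / u) ≤ b := by
  set t := j / (2 * a) with ht
  have ht0 : 0 < t := by positivity
  -- test at the radius where `a * r ^ u = j / 2`
  have hr := h (t ^ u⁻¹) (by positivity)
  rw [← Real.rpow_mul ht0.le, ← Real.rpow_mul ht0.le, inv_mul_cancel₀ hu.ne', Real.rpow_one] at hr
  have hat : a * t = j / 2 := by rw [ht]; field_simp
  have hkey : j / 2 ≤ b * t ^ (u⁻¹ * -v) := by linarith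
  calc j / 2 * t ^ (v / u) ≤ b * t ^ (u⁻¹ * -v) * t ^ (v / u) := by gcongr
    _ = b := by
      rw [mul_assoc, ← Real.rpow_add ht0, show u⁻¹ * -v + v / u = 0 by ring, Real.rpow_zero,
        mul_one]

theorem Real.mul_rpow_mul_rpow_le_of_half_mul_rpow_le {q α m j ω k p : ℝ} (hq0 : 0 < q)
    (hm : 0 < m) (hj : 0 < j) (hω : 0 < ω) (hk : 0 < k) (hp : 0 ≤ p)
    (h : j / 2 * (j / (2 * (m ^ q * ω ^ (1 - q)))) ^ (1 - α) ≤ p ^ q * k ^ (1 - q)) :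
    (2 ^ (α - 2) * ω ^ ((1 - q) * (α - 1)) * k ^ (-(1 - q))) ^ (1 / q) * m ^ (α - 1) *
      j ^ ((2 - α) / q) ≤ p := by
  calc (2 ^ (α - 2) * ω ^ ((1 - q) * (α - 1)) * k ^ (-(1 - q))) ^ (1 / q) * m ^ (α - 1) *
        j ^ ((2 - α) / q)
      = (j / 2 * (j / (2 * (m ^ q * ω ^ (1 - q)))) ^ (1 - α) / k ^ (1 - q)) ^ (1 / q) := by
        rw [← Real.exp_log (by positivity : 0 < (2 ^ (α - 2) * ω ^ ((1 - q) * (α - 1)) *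
          k ^ (-(1 - q))) ^ (1 / q) * m ^ (α - 1) * j ^ ((2 - α) / q)),
          ← Real.exp_log (by positivity : 0 < (j / 2 * (j / (2 * (m ^ q * ω ^ (1 - q)))) ^
            (1 - α) / k ^ (1 - q)) ^ (1 / q))]
        congr 1
        simp (disch := positivity) only [Real.log_mul, Real.log_rpow, Real.log_div]
        field_simp
        ring
    _ ≤ (p ^ q) ^ (1 / q) := by
        gcongr
        rwa [div_le_iff₀ (by positivity)]
    _ = p := by rw [← Real.rpow_mul hp, mul_one_div_cancel hq0.ne', Real.rpow_one]

theorem mul_le_lintegral_lintegral_of_le {X : Type*} [MeasurableSpace X] {μ : Measure X}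
    {K : X → X → ℝ≥0∞} {ρ : X → ℝ≥0∞} {A : ℝ≥0∞} (h : ∀ x, A ≤ ∫⁻ y, K x y * ρ y ∂μ) :
    (∫⁻ x, ρ x ∂μ) * A ≤ ∫⁻ x, ∫⁻ y, K x y * ρ x * ρ y ∂μ ∂μ :=
  calc (∫⁻ x, ρ x ∂μ) * A ≤ ∫⁻ x, ρ x * A ∂μ := lintegral_mul_const_le _ _
    _ ≤ ∫⁻ x, ρ x * ∫⁻ y, K x y * ρ y ∂μ ∂μ := lintegral_mono fun x => mul_le_mul_right (h x) _
    _ ≤ ∫⁻ x, ∫⁻ y, K x y * ρ x * ρ y ∂μ ∂μ := lintegral_mono fun x =>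
        (lintegral_const_mul_le _ _).trans_eq (lintegral_congr fun y => by ring)

theorem lintegral_rpow_le_ball_add_compl_ball {X : Type*} [PseudoMetricSpace X] [MeasurableSpace X]
    [OpensMeasurableSpace X] (μ : Measure X) {q : ℝ} (l : ℝ) (hq0 : 0 < q) (hq1 : q < 1)
    {ρ : X → ℝ≥0∞} (hρ : Measurable ρ) (x : X) {r : ℝ} (hr : 0 < r) :
    ∫⁻ y, ρ y ^ q ∂μ ≤ (∫⁻ y, ρ y ∂μ) ^ q * μ (ball x r) ^ (1 - q) +
      (∫⁻ y, ENNReal.ofReal (dist x y ^ l) * ρ y ∂μ) ^ q *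
        (∫⁻ y in (ball x r)ᶜ, ENNReal.ofReal (dist x y ^ (-(l * q / (1 - q)))) ∂μ) ^ (1 - q) := by
  have hw : Measurable fun y => ENNReal.ofReal (dist x y ^ l) := by fun_prop
  have hball : ∫⁻ y in ball x r, ρ y ^ q ∂μ ≤ (∫⁻ y, ρ y ∂μ) ^ q * μ (ball x r) ^ (1 - q) := by
    have h := ENNReal.lintegral_rpow_le_lintegral_mul_rpow (μ := μ.restrict (ball x r)) hq0 hq1
      hρ.aemeasurable aemeasurable_const (w := fun _ => 1) (by simp) (by simp)
    simp only [one_mul, ENNReal.one_rpow, lintegral_const, Measure.restrict_apply_univ] at h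
    exact h.trans (by gcongr; exact Measure.restrict_le_self)
  have hcompl : ∫⁻ y in (ball x r)ᶜ, ρ y ^ q ∂μ ≤
      (∫⁻ y, ENNReal.ofReal (dist x y ^ l) * ρ y ∂μ) ^ q *
        (∫⁻ y in (ball x r)ᶜ, ENNReal.ofReal (dist x y ^ (-(l * q / (1 - q)))) ∂μ) ^ (1 - q) := by
    have hpos : ∀ y ∈ (ball x r)ᶜ, 0 < dist x y := fun y hy =>
      hr.trans_le (by simpa [dist_comm] using hy)
    have h := ENNReal.lintegral_rpow_le_lintegral_mul_rpow (μ := μ.restrict (ball x r)ᶜ) hq0 hq1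
      hρ.aemeasurable hw.aemeasurable
      ((ae_restrict_iff' measurableSet_ball.compl).2 (Filter.Eventually.of_forall fun y hy => by
        simpa using Real.rpow_pos_of_pos (hpos y hy) l))
      (Filter.Eventually.of_forall fun _ => ENNReal.ofReal_ne_top)
    have hweight : ∫⁻ y in (ball x r)ᶜ, ENNReal.ofReal (dist x y ^ l) ^ (-(q / (1 - q))) ∂μ =
        ∫⁻ y in (ball x r)ᶜ, ENNReal.ofReal (dist x y ^ (-(l * q / (1 - q)))) ∂μ := by
      refine setLIntegral_congr_fun measurableSet_ball.compl fun y hy => ?_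
      rw [ENNReal.ofReal_rpow_of_pos (Real.rpow_pos_of_pos (hpos y hy) l),
        ← Real.rpow_mul dist_nonneg, mul_neg, mul_div_assoc]
    rw [hweight] at h
    exact h.trans (by gcongr; exact Measure.restrict_le_self)
  calc ∫⁻ y, ρ y ^ q ∂μ = ∫⁻ y in ball x r, ρ y ^ q ∂μ + ∫⁻ y in (ball x r)ᶜ, ρ y ^ q ∂μ :=
        (lintegral_add_compl _ measurableSet_ball).symm
    _ ≤ _ := add_le_add hball hcompl

section AddHaar

variable {E : Type*} [NormedAddCommGroup E] [NormedSpace ℝ E] [MeasurableSpace E] [BorelSpace E]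
  [FiniteDimensional ℝ E] (μ : Measure E) [μ.IsAddHaarMeasure]

theorem setLIntegral_compl_ball_norm_rpow_neg_lt_top {s : ℝ} (hs : (finrank ℝ E : ℝ) < s) :
    ∫⁻ z in (ball (0 : E) 1)ᶜ, ENNReal.ofReal (‖z‖ ^ (-s)) ∂μ < ∞ := by
  have hs0 : 0 < s := (Nat.cast_nonneg _).trans_lt hs
  have hle : ∀ z ∈ (ball (0 : E) 1)ᶜ,
      ENNReal.ofReal (‖z‖ ^ (-s)) ≤ ENNReal.ofReal (2 ^ s) * ENNReal.ofReal ((1 + ‖z‖) ^ (-s)) := by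
    intro z hz
    have hz1 : 1 ≤ ‖z‖ := by simpa using hz
    rw [← ENNReal.ofReal_mul (by positivity)]
    refine ENNReal.ofReal_le_ofReal ?_
    calc ‖z‖ ^ (-s) = 2 ^ s * (2 * ‖z‖) ^ (-s) := by
          rw [Real.mul_rpow zero_le_two (by positivity), ← mul_assoc, ← Real.rpow_add two_pos,
            add_neg_cancel, Real.rpow_zero, one_mul]
      _ ≤ 2 ^ s * (1 + ‖z‖) ^ (-s) := by
          refine mul_le_mul_of_nonneg_left ?_ (by positivity)
          exact Real.rpow_le_rpow_of_nonpos (by positivity) (by linarith) (by linarith)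
  calc ∫⁻ z in (ball (0 : E) 1)ᶜ, ENNReal.ofReal (‖z‖ ^ (-s)) ∂μ
      ≤ ∫⁻ z in (ball (0 : E) 1)ᶜ, ENNReal.ofReal (2 ^ s) * ENNReal.ofReal ((1 + ‖z‖) ^ (-s)) ∂μ :=
        setLIntegral_mono' measurableSet_ball.compl hle
    _ ≤ ∫⁻ z, ENNReal.ofReal (2 ^ s) * ENNReal.ofReal ((1 + ‖z‖) ^ (-s)) ∂μ :=
        setLIntegral_le_lintegral _ _
    _ = ENNReal.ofReal (2 ^ s) * ∫⁻ z, ENNReal.ofReal ((1 + ‖z‖) ^ (-s)) ∂μ :=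
        lintegral_const_mul' _ _ ENNReal.ofReal_ne_top
    _ < ∞ := ENNReal.mul_lt_top ENNReal.ofReal_lt_top (finite_integral_one_add_norm hs)

theorem setLIntegral_compl_ball_norm_sub_rpow_neg (x : E) {r : ℝ} (hr : 0 < r) (s : ℝ) :
    ∫⁻ y in (ball x r)ᶜ, ENNReal.ofReal (‖x - y‖ ^ (-s)) ∂μ =
      ENNReal.ofReal (r ^ ((finrank ℝ E : ℝ) - s)) *
        ∫⁻ z in (ball (0 : E) 1)ᶜ, ENNReal.ofReal (‖z‖ ^ (-s)) ∂μ := by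
  set g : E → ℝ≥0∞ := (ball (0 : E) 1)ᶜ.indicator fun z => ENNReal.ofReal (‖z‖ ^ (-s))
  have hg : Measurable g := Measurable.indicator (by fun_prop) measurableSet_ball.compl
  have hrescale : ∀ y, (ball x r)ᶜ.indicator (fun y => ENNReal.ofReal (‖x - y‖ ^ (-s))) y =
      ENNReal.ofReal (r ^ (-s)) * g (r⁻¹ • (y - x)) := by
    intro y
    have hnorm : ‖r⁻¹ • (y - x)‖ = r⁻¹ * ‖x - y‖ := by
      rw [norm_smul, norm_inv, Real.norm_of_nonneg hr.le, norm_sub_rev]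
    by_cases hy : y ∈ ball x r
    · have : r⁻¹ • (y - x) ∈ ball (0 : E) 1 := by
        rw [mem_ball, dist_eq_norm, sub_zero, hnorm, inv_mul_lt_one₀ hr]
        rwa [mem_ball, dist_eq_norm'] at hy
      simp [g, hy, this]
    · have : r⁻¹ • (y - x) ∉ ball (0 : E) 1 := by
        rw [mem_ball, dist_eq_norm, sub_zero, hnorm, inv_mul_lt_one₀ hr]
        rwa [mem_ball, dist_eq_norm'] at hy
      simp only [g, Set.indicator_of_mem (Set.mem_compl hy),
        Set.indicator_of_mem (Set.mem_compl this),
        ← ENNReal.ofReal_mul (Real.rpow_nonneg hr.le _), hnorm]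
      rw [Real.mul_rpow (inv_nonneg.2 hr.le) (norm_nonneg _), Real.inv_rpow hr.le,
        ← Real.rpow_neg hr.le, neg_neg, ← mul_assoc, ← Real.rpow_add hr, neg_add_cancel,
        Real.rpow_zero, one_mul]
  have hmap : Measure.map (r⁻¹ • ·) μ = ENNReal.ofReal (r ^ finrank ℝ E) • μ := by
    rw [Measure.map_addHaar_smul μ (inv_ne_zero hr.ne'), inv_pow, inv_inv,
      abs_of_pos (pow_pos hr _)]
  calc ∫⁻ y in (ball x r)ᶜ, ENNReal.ofReal (‖x - y‖ ^ (-s)) ∂μ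
      = ∫⁻ y, ENNReal.ofReal (r ^ (-s)) * g (r⁻¹ • (y - x)) ∂μ := by
        rw [← lintegral_indicator measurableSet_ball.compl]
        exact lintegral_congr hrescale
    _ = ENNReal.ofReal (r ^ (-s)) * ∫⁻ y, g (r⁻¹ • y) ∂μ := by
        rw [lintegral_const_mul' _ _ ENNReal.ofReal_ne_top,
          lintegral_sub_right_eq_self (fun y => g (r⁻¹ • y)) x]
    _ = ENNReal.ofReal (r ^ (-s)) * (ENNReal.ofReal (r ^ finrank ℝ E) * ∫⁻ z, g z ∂μ) := by
        rw [← lintegral_map hg (measurable_const_smul _), hmap, lintegral_smul_measure,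
          smul_eq_mul]
    _ = _ := by
        rw [lintegral_indicator measurableSet_ball.compl, ← mul_assoc,
          ← ENNReal.ofReal_mul (by positivity), ← Real.rpow_natCast, ← Real.rpow_add hr,
          neg_add_eq_sub]

theorem setLIntegral_compl_ball_norm_rpow_neg_pos [Nontrivial E] (s : ℝ) :
    0 < ∫⁻ z in (ball (0 : E) 1)ᶜ, ENNReal.ofReal (‖z‖ ^ (-s)) ∂μ := by
  have hinf : μ (ball (0 : E) 1)ᶜ = ∞ := by
    rw [measure_compl measurableSet_ball measure_ball_lt_top.ne,
      measure_univ_of_isAddLeftInvariant, ENNReal.top_sub measure_ball_lt_top.ne]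
  rw [setLIntegral_pos_iff (by fun_prop)]
  calc (0 : ℝ≥0∞) < μ (ball (0 : E) 1)ᶜ := by simp [hinf]
    _ ≤ _ := by
      refine measure_mono fun z hz => ⟨?_, hz⟩
      have hz1 : 1 ≤ ‖z‖ := by simpa using hz
      simpa using Real.rpow_pos_of_pos (one_pos.trans_le hz1) (-s)

theorem lintegral_rpow_le_mul_rpow_add_mul_rpow_neg {q : ℝ} (l : ℝ) (hq0 : 0 < q) (hq1 : q < 1)
    {ρ : E → ℝ≥0∞} (hρ : Measurable ρ) (x : E) {r : ℝ} (hr : 0 < r) :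
    ∫⁻ y, ρ y ^ q ∂μ ≤
      (∫⁻ y, ρ y ∂μ) ^ q * μ (ball 0 1) ^ (1 - q) *
          ENNReal.ofReal (r ^ (finrank ℝ E * (1 - q))) +
        (∫⁻ y, ENNReal.ofReal (‖x - y‖ ^ l) * ρ y ∂μ) ^ q *
          (∫⁻ z in (ball (0 : E) 1)ᶜ, ENNReal.ofReal (‖z‖ ^ (-(l * q / (1 - q)))) ∂μ) ^ (1 - q) *
          ENNReal.ofReal (r ^ (-(l * q - finrank ℝ E * (1 - q)))) := by
  have h1q : 0 ≤ 1 - q := by linarith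
  have h := lintegral_rpow_le_ball_add_compl_ball μ l hq0 hq1 hρ x hr
  simp only [dist_eq_norm] at h
  rw [Measure.addHaar_ball_of_pos μ x hr, setLIntegral_compl_ball_norm_sub_rpow_neg μ x hr,
    ENNReal.mul_rpow_of_nonneg _ _ h1q, ENNReal.mul_rpow_of_nonneg _ _ h1q,
    ENNReal.ofReal_rpow_of_nonneg (by positivity) h1q,
    ENNReal.ofReal_rpow_of_nonneg (by positivity) h1q, ← Real.rpow_natCast,
    ← Real.rpow_mul hr.le, ← Real.rpow_mul hr.le] at h
  have hexp : ((finrank ℝ E : ℝ) - l * q / (1 - q)) * (1 - q) =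
      -(l * q - finrank ℝ E * (1 - q)) := by
    field_simp [(by linarith : 1 - q ≠ 0)]
    ring
  rw [hexp] at h
  exact h.trans_eq (by ring)

theorem exists_pos_le_lintegral_norm_sub_rpow_mul [Nontrivial E] {q l : ℝ} (hq0 : 0 < q)
    (hq1 : q < 1) (hqN : finrank ℝ E * (1 - q) < l * q) :
    ∃ c : ℝ, 0 < c ∧ ∀ ρ : E → ℝ≥0∞, Measurable ρ → ∫⁻ y, ρ y ∂μ ≠ 0 → ∫⁻ y, ρ y ∂μ ≠ ∞ →
      ∫⁻ y, ρ y ^ q ∂μ ≠ 0 → ∫⁻ y, ρ y ^ q ∂μ ≠ ∞ → ∀ x : E,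
      let α := (2 * finrank ℝ E - q * (2 * finrank ℝ E + l)) / (finrank ℝ E * (1 - q))
      ENNReal.ofReal (c * (∫⁻ y, ρ y ∂μ).toReal ^ (α - 1) *
          (∫⁻ y, ρ y ^ q ∂μ).toReal ^ ((2 - α) / q)) ≤
        ∫⁻ y, ENNReal.ofReal (‖x - y‖ ^ l) * ρ y ∂μ := by
  set n : ℝ := (finrank ℝ E : ℝ)
  set α := (2 * n - q * (2 * n + l)) / (n * (1 - q)) with hα
  have hn : 0 < n := Nat.cast_pos.2 finrank_pos
  have h1q : 0 < 1 - q := by linarith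
  have hexp : (l * q - n * (1 - q)) / (n * (1 - q)) = 1 - α := by
    rw [hα]
    field_simp
    ring
  set K := ∫⁻ z in (ball (0 : E) 1)ᶜ, ENNReal.ofReal (‖z‖ ^ (-(l * q / (1 - q)))) ∂μ
  have hK : K ≠ ∞ := (setLIntegral_compl_ball_norm_rpow_neg_lt_top μ
    (by rwa [lt_div_iff₀ h1q])).ne
  have hk : 0 < K.toReal :=
    ENNReal.toReal_pos (setLIntegral_compl_ball_norm_rpow_neg_pos μ _).ne' hK
  have hω : 0 < (μ (ball 0 1)).toReal :=
    ENNReal.toReal_pos (measure_ball_pos μ 0 one_pos).ne' measure_ball_lt_top.ne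
  refine ⟨(2 ^ (α - 2) * (μ (ball 0 1)).toReal ^ ((1 - q) * (α - 1)) * K.toReal ^ (-(1 - q))) ^
    (1 / q), by positivity, fun ρ hρ hM0 hM hJ0 hJ x => ?_⟩
  set P := ∫⁻ y, ENNReal.ofReal (‖x - y‖ ^ l) * ρ y ∂μ
  rcases eq_or_ne P ∞ with hP | hP
  · simp [hP]
  have hm : 0 < (∫⁻ y, ρ y ∂μ).toReal := ENNReal.toReal_pos hM0 hM
  have hj : 0 < (∫⁻ y, ρ y ^ q ∂μ).toReal := ENNReal.toReal_pos hJ0 hJ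
  have hradius : ∀ r, 0 < r → (∫⁻ y, ρ y ^ q ∂μ).toReal ≤
      (∫⁻ y, ρ y ∂μ).toReal ^ q * (μ (ball 0 1)).toReal ^ (1 - q) * r ^ (n * (1 - q)) +
        P.toReal ^ q * K.toReal ^ (1 - q) * r ^ (-(l * q - n * (1 - q))) := by
    intro r hr
    have h := ENNReal.toReal_mono (by finiteness)
      (lintegral_rpow_le_mul_rpow_add_mul_rpow_neg μ l hq0 hq1 hρ x hr)
    rw [ENNReal.toReal_add (by finiteness) (by finiteness)] at h
    simpa only [ENNReal.toReal_mul, ← ENNReal.toReal_rpow,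
      ENNReal.toReal_ofReal (Real.rpow_nonneg hr.le _)] using h
  have hopt := Real.mul_rpow_le_of_forall_le_add_rpow (by positivity) hj
    (by positivity : 0 < n * (1 - q)) hradius
  rw [hexp] at hopt
  rw [ENNReal.ofReal_le_iff_le_toReal hP]
  exact Real.mul_rpow_mul_rpow_le_of_half_mul_rpow_le hq0 hm hj hω hk ENNReal.toReal_nonneg hopt

theorem exists_pos_mul_rpow_le_lintegral_lintegral_norm_sub_rpow [Nontrivial E] {q l : ℝ}
    (hq0 : 0 < q) (hq1 : q < 1) (hqN : finrank ℝ E * (1 - q) < l * q) :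
    ∃ C : ℝ, 0 < C ∧ ∀ ρ : E → ℝ≥0∞, Measurable ρ →
      ∫⁻ x, ρ x ∂μ ≠ ∞ → ∫⁻ x, ρ x ^ q ∂μ ≠ ∞ →
      let α := (2 * finrank ℝ E - q * (2 * finrank ℝ E + l)) / (finrank ℝ E * (1 - q))
      ENNReal.ofReal C * (∫⁻ x, ρ x ∂μ) ^ α * (∫⁻ x, ρ x ^ q ∂μ) ^ ((2 - α) / q) ≤
        ∫⁻ x, ∫⁻ y, ENNReal.ofReal (‖x - y‖ ^ l) * ρ x * ρ y ∂μ ∂μ := by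
  obtain ⟨c, hc, hpot⟩ := exists_pos_le_lintegral_norm_sub_rpow_mul μ hq0 hq1 hqN
  refine ⟨c, hc, fun ρ hρ hM hJ => ?_⟩
  intro α
  set M := ∫⁻ x, ρ x ∂μ
  set J := ∫⁻ x, ρ x ^ q ∂μ
  have hn : (0 : ℝ) < finrank ℝ E := Nat.cast_pos.2 finrank_pos
  have hγ : 0 < (2 - α) / q := by
    have : 2 - α = l * q / (finrank ℝ E * (1 - q)) := by
      simp only [α]
      field_simp [(by linarith : 1 - q ≠ 0)]
      ring
    rw [this]
    have : 0 < l * q := (mul_pos hn (by linarith)).trans hqN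
    positivity
  rcases eq_or_ne J 0 with hJ0 | hJ0
  · simp [hJ0, ENNReal.zero_rpow_of_pos hγ]
  have hM0 : M ≠ 0 := by
    intro hM0
    refine hJ0 ((lintegral_congr_ae ?_).trans lintegral_zero)
    filter_upwards [(lintegral_eq_zero_iff hρ).1 hM0] with x hx
    simp [hx, hq0]
  have hm : 0 < M.toReal := ENNReal.toReal_pos hM0 hM
  have hj : 0 < J.toReal := ENNReal.toReal_pos hJ0 hJ
  calc ENNReal.ofReal c * M ^ α * J ^ ((2 - α) / q)
      = ENNReal.ofReal (c * M.toReal ^ α * J.toReal ^ ((2 - α) / q)) := by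
        rw [ENNReal.ofReal_mul (by positivity), ENNReal.ofReal_mul hc.le,
          ← ENNReal.ofReal_rpow_of_pos hm, ← ENNReal.ofReal_rpow_of_pos hj,
          ENNReal.ofReal_toReal hM, ENNReal.ofReal_toReal hJ]
    _ = ENNReal.ofReal (M.toReal * (c * M.toReal ^ (α - 1) * J.toReal ^ ((2 - α) / q))) := by
        rw [Real.rpow_sub_one hm.ne']
        field_simp
    _ = M * ENNReal.ofReal (c * M.toReal ^ (α - 1) * J.toReal ^ ((2 - α) / q)) := by
        rw [ENNReal.ofReal_mul hm.le, ENNReal.ofReal_toReal hM]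
    _ ≤ _ := mul_le_lintegral_lintegral_of_le (K := fun x y => ENNReal.ofReal (‖x - y‖ ^ l))
        (hpot ρ hρ hM0 hM hJ0 hJ)

end AddHaar

theorem stmt_9 (N : ℕ) (hN : 1 ≤ N) (l q : ℝ) (hl : 0 < l)
    (hq1 : q < 1) (hq0 : (N : ℝ) / (N + l) < q) :
    ∃ C : ℝ, 0 < C ∧ ∀ ρ : EuclideanSpace ℝ (Fin N) → ENNReal, Measurable ρ →
      (∫⁻ x, ρ x) < ⊤ → (∫⁻ x, ρ x ^ q) < ⊤ →
      ENNReal.ofReal C *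
          (∫⁻ x, ρ x) ^ ((2 * N - q * (2 * N + l)) / ((N : ℝ) * (1 - q))) *
          (∫⁻ x, ρ x ^ q) ^ ((2 - (2 * N - q * (2 * N + l)) / ((N : ℝ) * (1 - q))) / q)
        ≤ ∫⁻ x, ∫⁻ y, ENNReal.ofReal (‖x - y‖ ^ l) * ρ x * ρ y := by
  have : Nonempty (Fin N) := ⟨⟨0, hN⟩⟩
  have hNl : (0 : ℝ) < N + l := by positivity
  have hqN : (finrank ℝ (EuclideanSpace ℝ (Fin N)) : ℝ) * (1 - q) < l * q := by
    rw [finrank_euclideanSpace_fin]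
    rw [div_lt_iff₀ hNl] at hq0
    linarith
  obtain ⟨C, hC, h⟩ := exists_pos_mul_rpow_le_lintegral_lintegral_norm_sub_rpow volume
    ((div_pos (by exact_mod_cast hN) hNl).trans hq0) hq1 hqN
  refine ⟨C, hC, fun ρ hρ hM hJ => ?_⟩
  simpa only [finrank_euclideanSpace_fin] using h ρ hρ hM.ne hJ.ne
end

section
/- Failure of the reverse HLS inequality for small q: if λ > 0 and 0 < q < N/(N+λ), then the infimum of I_λ[ρ] / [ (∫ρ dx)^α (∫ρ^q dx)^{(2−α)/q} ] over nonnegative ρ ∈ L¹ ∩ L^q(ℝ^N), ρ ≢ 0, equals 0, where α = (2N − q(2N+λ))/(N(1−q)). -/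
/-!
Take for `ρ` the indicator `u` of the unit ball plus a bump `w` of mass `M` spread uniformly over
the ball of radius `ε`, where `(2ε)^λ = 1/M`. Then `∫ρ = |B₁| + M` and `∫ρ^q ≥ |B₁|`, while
bounding `|x - y|^λ` by the `λ`-th power of the diameter of the supports in each of the four pair
interactions of `u + w` gives `I_λ[ρ] = O(M)`. The quotient is thus `O(M^{1-α})`, and `α > 1`
exactly when `q < N/(N+λ)`.
-/

open MeasureTheory Metric Filter Set Function

theorem hls_exponent_mem_Ioo {N l q : ℝ} (hN : 0 ≤ N) (hl : 0 < l) (hq0 : 0 < q)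
    (hq : q < N / (N + l)) :
    (2 * N - q * (2 * N + l)) / (N * (1 - q)) ∈ Ioo 1 2 := by
  have hqN : q * (N + l) < N := (lt_div_iff₀ (by positivity)).1 hq
  have hq1 : q < 1 := by nlinarith
  have hden : 0 < N * (1 - q) := mul_pos (by nlinarith) (by linarith)
  constructor
  · rw [lt_div_iff₀ hden]; linarith
  · rw [div_lt_iff₀ hden]; nlinarith

theorem sInf_eq_zero_of_forall_exists_le_mul_rpow_neg {S : Set ℝ} (hS : ∀ c ∈ S, 0 ≤ c)
    {C γ : ℝ} (hγ : 0 < γ) (h : ∀ M ≥ 1, ∃ c ∈ S, c ≤ C * M ^ (-γ)) : sInf S = 0 := by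
  have hlim : Tendsto (fun M : ℝ => C * M ^ (-γ)) atTop (nhds 0) := by
    simpa using (tendsto_rpow_neg_atTop hγ).const_mul C
  refine csInf_eq_of_forall_ge_of_forall_gt_exists_lt ?_ hS fun δ hδ => ?_
  · obtain ⟨c, hc, -⟩ := h 1 le_rfl
    exact ⟨c, hc⟩
  · obtain ⟨M, hMδ, hM⟩ :=
      ((hlim.eventually (gt_mem_nhds hδ)).and (eventually_ge_atTop 1)).exists
    obtain ⟨c, hc, hcM⟩ := h M hM
    exact ⟨c, hc, hcM.trans_lt hMδ⟩

theorem div_add_rpow_mul_rpow_le {I J K v M α β : ℝ} (hI : 0 ≤ I) (hIK : I ≤ K * M)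
    (hv : 0 < v) (hM : 0 < M) (hvJ : v ≤ J) (hα : 0 ≤ α) (hβ : 0 ≤ β) :
    I / ((v + M) ^ α * J ^ β) ≤ K / v ^ β * M ^ (-(α - 1)) := by
  calc I / ((v + M) ^ α * J ^ β) ≤ K * M / (M ^ α * v ^ β) := by
        refine div_le_div₀ (hI.trans hIK) hIK (by positivity) ?_
        gcongr
        linarith
    _ = K / v ^ β * M ^ (-(α - 1)) := by
        rw [Real.rpow_neg hM.le, Real.rpow_sub_one hM.ne']
        field_simp

section Kernel

variable {X Y : Type*} {K : X × Y → ℝ} {f : X → ℝ} {g : Y → ℝ} {R : ℝ}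

theorem kernel_mul_le_of_le_on_support (hKR : ∀ x ∈ support f, ∀ y ∈ support g, K (x, y) ≤ R)
    (hf : 0 ≤ f) (hg : 0 ≤ g) (p : X × Y) : K p * f p.1 * g p.2 ≤ R * (f p.1 * g p.2) := by
  by_cases hx : f p.1 = 0
  · simp [hx]
  by_cases hy : g p.2 = 0
  · simp [hy]
  rw [mul_assoc]
  exact mul_le_mul_of_nonneg_right (hKR _ hx _ hy) (mul_nonneg (hf _) (hg _))

variable [MeasurableSpace X] [MeasurableSpace Y] {μ : Measure X} {ν : Measure Y}

theorem integrable_kernel_mul (hK : AEStronglyMeasurable K (μ.prod ν)) (hK0 : 0 ≤ K)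
    (hKR : ∀ x ∈ support f, ∀ y ∈ support g, K (x, y) ≤ R) (hf0 : 0 ≤ f) (hg0 : 0 ≤ g)
    (hf : Integrable f μ) (hg : Integrable g ν) :
    Integrable (fun p => K p * f p.1 * g p.2) (μ.prod ν) := by
  refine ((hf.mul_prod hg).const_mul R).mono' ((hK.mul hf.1.comp_fst).mul hg.1.comp_snd)
    (ae_of_all _ fun p => ?_)
  rw [Real.norm_of_nonneg (mul_nonneg (mul_nonneg (hK0 p) (hf0 p.1)) (hg0 p.2))]
  exact kernel_mul_le_of_le_on_support hKR hf0 hg0 p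

theorem integral_kernel_mul_le [SFinite μ] [SFinite ν] (hK0 : 0 ≤ K)
    (hKR : ∀ x ∈ support f, ∀ y ∈ support g, K (x, y) ≤ R) (hf0 : 0 ≤ f) (hg0 : 0 ≤ g)
    (hf : Integrable f μ) (hg : Integrable g ν) :
    ∫ p, K p * f p.1 * g p.2 ∂μ.prod ν ≤ R * ((∫ x, f x ∂μ) * ∫ y, g y ∂ν) := by
  rw [← integral_prod_mul, ← integral_const_mul]
  refine integral_mono_of_nonneg (ae_of_all _ fun p => ?_) ((hf.mul_prod hg).const_mul R)
    (ae_of_all _ (kernel_mul_le_of_le_on_support hKR hf0 hg0))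
  exact mul_nonneg (mul_nonneg (hK0 p) (hf0 p.1)) (hg0 p.2)

theorem integral_kernel_add_mul_add {f₁ f₂ : X → ℝ} {g₁ g₂ : Y → ℝ}
    (h₁₁ : Integrable (fun p => K p * f₁ p.1 * g₁ p.2) (μ.prod ν))
    (h₁₂ : Integrable (fun p => K p * f₁ p.1 * g₂ p.2) (μ.prod ν))
    (h₂₁ : Integrable (fun p => K p * f₂ p.1 * g₁ p.2) (μ.prod ν))
    (h₂₂ : Integrable (fun p => K p * f₂ p.1 * g₂ p.2) (μ.prod ν)) :
    ∫ p, K p * (f₁ + f₂) p.1 * (g₁ + g₂) p.2 ∂μ.prod ν =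
      (∫ p, K p * f₁ p.1 * g₁ p.2 ∂μ.prod ν) + (∫ p, K p * f₁ p.1 * g₂ p.2 ∂μ.prod ν) +
        (∫ p, K p * f₂ p.1 * g₁ p.2 ∂μ.prod ν) + ∫ p, K p * f₂ p.1 * g₂ p.2 ∂μ.prod ν := by
  have hexpand : (fun p => K p * (f₁ + f₂) p.1 * (g₁ + g₂) p.2) = fun p =>
      K p * f₁ p.1 * g₁ p.2 + K p * f₁ p.1 * g₂ p.2 + K p * f₂ p.1 * g₁ p.2 +
        K p * f₂ p.1 * g₂ p.2 := by
    ext p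
    simp only [Pi.add_apply]
    ring
  rw [hexpand, integral_add ?_ h₂₂, integral_add ?_ h₂₁, integral_add h₁₁ h₁₂]
  exacts [h₁₁.add h₁₂, (h₁₁.add h₁₂).add h₂₁]

end Kernel

theorem MeasureTheory.Integrable.rpow_of_support_subset {X : Type*} [MeasurableSpace X]
    {μ : Measure X} {f : X → ℝ} {s : Set X} {q : ℝ} (hf : Integrable f μ) (hf0 : 0 ≤ f)
    (hsm : MeasurableSet s) (hs : μ s ≠ ⊤) (hfs : support f ⊆ s) (hq0 : 0 < q) (hq1 : q ≤ 1) :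
    Integrable (fun x => f x ^ q) μ := by
  have hs1 : Integrable (s.indicator fun _ => (1 : ℝ)) μ :=
    (integrable_indicator_iff hsm).2 (integrableOn_const hs)
  refine (hs1.add hf).mono'
    (hf.1.aemeasurable.pow_const q).aestronglyMeasurable (ae_of_all _ fun x => ?_)
  rw [Real.norm_of_nonneg (Real.rpow_nonneg (hf0 x) q), Pi.add_apply]
  by_cases hx : f x = 0
  · rw [hx, Real.zero_rpow hq0.ne', add_zero]
    exact indicator_nonneg (fun _ _ => zero_le_one) x
  rw [indicator_of_mem (hfs hx)]
  have hfx : 0 ≤ f x := hf0 x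
  rcases le_total (f x) 1 with h | h
  · linarith [Real.rpow_le_one hfx h hq0.le]
  · calc f x ^ q ≤ f x ^ (1 : ℝ) := Real.rpow_le_rpow_of_exponent_le h hq1
      _ ≤ 1 + f x := by rw [Real.rpow_one]; linarith

section BallWithBump

variable {E : Type*} [NormedAddCommGroup E] {ε a : ℝ}

noncomputable def ballWithBump (ε a : ℝ) : E → ℝ :=
  (ball (0 : E) 1).indicator (fun _ => 1) + (ball (0 : E) ε).indicator fun _ => a

theorem ballWithBump_nonneg (ha : 0 ≤ a) : 0 ≤ ballWithBump (E := E) ε a := fun x =>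
  add_nonneg (indicator_nonneg (fun _ _ => zero_le_one) x) (indicator_nonneg (fun _ _ => ha) x)

theorem one_le_ballWithBump (ha : 0 ≤ a) {x : E} (hx : x ∈ ball 0 1) :
    1 ≤ ballWithBump ε a x := by
  have hbump : 0 ≤ (ball (0 : E) ε).indicator (fun _ => a) x := indicator_nonneg (fun _ _ => ha) x
  simp only [ballWithBump, Pi.add_apply, indicator_of_mem hx]
  linarith

theorem support_ballWithBump_subset (hε : ε ≤ 1) :
    support (ballWithBump (E := E) ε a) ⊆ ball 0 1 :=
  (support_add _ _).trans <| union_subset support_indicator_subset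
    (support_indicator_subset.trans (ball_subset_ball hε))

theorem norm_sub_rpow_le_of_mem_ball {x y : E} {r l : ℝ} (hx : x ∈ ball 0 r) (hy : y ∈ ball 0 r)
    (hl : 0 ≤ l) : ‖x - y‖ ^ l ≤ (2 * r) ^ l := by
  refine Real.rpow_le_rpow (norm_nonneg _) ((norm_sub_le x y).trans ?_) hl
  rw [mem_ball_zero_iff] at hx hy
  linarith

theorem norm_sub_rpow_mul_mul_nonneg {ρ : E → ℝ} (hρ : 0 ≤ ρ) (l : ℝ) (p : E × E) :
    0 ≤ ‖p.1 - p.2‖ ^ l * ρ p.1 * ρ p.2 :=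
  mul_nonneg (mul_nonneg (Real.rpow_nonneg (norm_nonneg _) _) (hρ _)) (hρ _)

theorem continuous_norm_sub_rpow {l : ℝ} (hl : 0 ≤ l) :
    Continuous fun p : E × E => ‖p.1 - p.2‖ ^ l :=
  (continuous_fst.sub continuous_snd).norm.rpow_const fun _ => Or.inr hl

variable [MeasurableSpace E] (μ : Measure E)

theorem not_ballWithBump_ae_eq_zero [μ.IsOpenPosMeasure] (ha : 0 ≤ a) :
    ¬ballWithBump ε a =ᵐ[μ] 0 := fun h => (measure_ball_pos μ (0 : E) one_pos).ne' <|
  measure_eq_zero_iff_ae_notMem.2 <| h.mono fun x hx hmem => by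
    have := one_le_ballWithBump (ε := ε) ha hmem
    rw [hx, Pi.zero_apply] at this
    linarith

variable [ProperSpace E] [IsFiniteMeasureOnCompacts μ]

theorem measureReal_ball_pos [μ.IsOpenPosMeasure] {r : ℝ} (hr : 0 < r) :
    0 < μ.real (ball (0 : E) r) :=
  ENNReal.toReal_pos (measure_ball_pos μ 0 hr).ne' measure_ball_lt_top.ne

variable [BorelSpace E]

theorem integrable_indicator_ball_const (r c : ℝ) :
    Integrable ((ball (0 : E) r).indicator fun _ => c) μ :=
  (integrable_indicator_iff measurableSet_ball).2 (integrableOn_const measure_ball_lt_top.ne)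

theorem integrable_ballWithBump : Integrable (ballWithBump ε a) μ :=
  (integrable_indicator_ball_const μ 1 1).add (integrable_indicator_ball_const μ ε a)

theorem integral_ballWithBump :
    ∫ x, ballWithBump ε a x ∂μ = μ.real (ball (0 : E) 1) + a * μ.real (ball (0 : E) ε) := by
  rw [ballWithBump, integral_add' (integrable_indicator_ball_const μ 1 1)
    (integrable_indicator_ball_const μ ε a), integral_indicator_const _ measurableSet_ball,
    integral_indicator_const _ measurableSet_ball, smul_eq_mul, smul_eq_mul, mul_one, mul_comm]

theorem integrable_ballWithBump_rpow (ha : 0 ≤ a) (hε : ε ≤ 1) {q : ℝ} (hq0 : 0 < q)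
    (hq1 : q ≤ 1) : Integrable (fun x => ballWithBump ε a x ^ q) μ :=
  (integrable_ballWithBump μ).rpow_of_support_subset (ballWithBump_nonneg ha) measurableSet_ball
    measure_ball_lt_top.ne (support_ballWithBump_subset hε) hq0 hq1

theorem measureReal_ball_le_integral_ballWithBump_rpow (ha : 0 ≤ a) (hε : ε ≤ 1) {q : ℝ}
    (hq0 : 0 < q) (hq1 : q ≤ 1) :
    μ.real (ball (0 : E) 1) ≤ ∫ x, ballWithBump ε a x ^ q ∂μ := by
  calc μ.real (ball (0 : E) 1) = ∫ x, (ball (0 : E) 1).indicator (fun _ => (1 : ℝ)) x ∂μ := by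
        rw [integral_indicator_const _ measurableSet_ball, smul_eq_mul, mul_one]
    _ ≤ ∫ x, ballWithBump ε a x ^ q ∂μ := by
        refine integral_mono (integrable_indicator_ball_const μ 1 1)
          (integrable_ballWithBump_rpow μ ha hε hq0 hq1) fun x => ?_
        by_cases hx : x ∈ ball (0 : E) 1
        · rw [indicator_of_mem hx]
          exact Real.one_le_rpow (one_le_ballWithBump ha hx) hq0.le
        · rw [indicator_of_notMem hx]
          exact Real.rpow_nonneg (ballWithBump_nonneg ha x) q

theorem integrable_interaction_ballWithBump {l : ℝ} (hl : 0 ≤ l) (ha : 0 ≤ a) (hε : ε ≤ 1) :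
    Integrable (fun p : E × E => ‖p.1 - p.2‖ ^ l * ballWithBump ε a p.1 * ballWithBump ε a p.2)
      (μ.prod μ) :=
  integrable_kernel_mul (R := (2 * 1) ^ l) (continuous_norm_sub_rpow hl).aestronglyMeasurable
    (fun _ => Real.rpow_nonneg (norm_nonneg _) _)
    (fun _ hx _ hy => norm_sub_rpow_le_of_mem_ball (support_ballWithBump_subset hε hx)
      (support_ballWithBump_subset hε hy) hl)
    (ballWithBump_nonneg ha) (ballWithBump_nonneg ha) (integrable_ballWithBump μ)
    (integrable_ballWithBump μ)

theorem integral_interaction_ballWithBump_le {l : ℝ} (hl : 0 ≤ l) (ha : 0 ≤ a) (hε : ε ≤ 1) :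
    ∫ p : E × E, ‖p.1 - p.2‖ ^ l * ballWithBump ε a p.1 * ballWithBump ε a p.2 ∂μ.prod μ ≤
      2 ^ l * μ.real (ball (0 : E) 1) * (μ.real (ball (0 : E) 1) + 2 * (a * μ.real (ball 0 ε))) +
        (2 * ε) ^ l * (a * μ.real (ball (0 : E) ε)) ^ 2 := by
  set u : E → ℝ := (ball 0 1).indicator fun _ => 1
  set w : E → ℝ := (ball 0 ε).indicator fun _ => a
  have hK := (continuous_norm_sub_rpow (E := E) hl).aestronglyMeasurable (μ := μ.prod μ)
  have hK0 : 0 ≤ fun p : E × E => ‖p.1 - p.2‖ ^ l := fun _ => Real.rpow_nonneg (norm_nonneg _) _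
  have hu0 : 0 ≤ u := indicator_nonneg fun _ _ => zero_le_one
  have hw0 : 0 ≤ w := indicator_nonneg fun _ _ => ha
  have hu := integrable_indicator_ball_const μ 1 1
  have hw := integrable_indicator_ball_const μ ε a
  have hsu : support u ⊆ ball 0 1 := support_indicator_subset
  have hswε : support w ⊆ ball 0 ε := support_indicator_subset
  have hsw : support w ⊆ ball 0 1 := hswε.trans (ball_subset_ball hε)
  have hR : ∀ {r : ℝ} {f g : E → ℝ}, support f ⊆ ball 0 r → support g ⊆ ball 0 r →
      ∀ x ∈ support f, ∀ y ∈ support g, ‖x - y‖ ^ l ≤ (2 * r) ^ l :=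
    fun hf hg _ hx _ hy => norm_sub_rpow_le_of_mem_ball (hf hx) (hg hy) hl
  have hIu : ∫ x, u x ∂μ = μ.real (ball 0 1) := by
    rw [integral_indicator_const _ measurableSet_ball, smul_eq_mul, mul_one]
  have hIw : ∫ x, w x ∂μ = a * μ.real (ball 0 ε) := by
    rw [integral_indicator_const _ measurableSet_ball, smul_eq_mul, mul_comm]
  have huu := integral_kernel_mul_le hK0 (hR hsu hsu) hu0 hu0 hu hu
  have huw := integral_kernel_mul_le hK0 (hR hsu hsw) hu0 hw0 hu hw
  have hwu := integral_kernel_mul_le hK0 (hR hsw hsu) hw0 hu0 hw hu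
  have hww := integral_kernel_mul_le hK0 (hR hswε hswε) hw0 hw0 hw hw
  simp only [hIu, hIw, mul_one] at huu huw hwu hww
  show ∫ p : E × E, ‖p.1 - p.2‖ ^ l * (u + w) p.1 * (u + w) p.2 ∂μ.prod μ ≤ _
  rw [integral_kernel_add_mul_add (integrable_kernel_mul hK hK0 (hR hsu hsu) hu0 hu0 hu hu)
    (integrable_kernel_mul hK hK0 (hR hsu hsw) hu0 hw0 hu hw)
    (integrable_kernel_mul hK hK0 (hR hsw hsu) hw0 hu0 hw hu)
    (integrable_kernel_mul hK hK0 (hR hswε hswε) hw0 hw0 hw hw)]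
  linarith

theorem exists_ballWithBump_interaction_le [μ.IsOpenPosMeasure] {l : ℝ} (hl : 0 < l) {M : ℝ}
    (hM : 1 ≤ M) :
    ∃ ε a : ℝ, 0 ≤ a ∧ ε ≤ 1 ∧ ∫ x, ballWithBump ε a x ∂μ = μ.real (ball (0 : E) 1) + M ∧
      ∫ p : E × E, ‖p.1 - p.2‖ ^ l * ballWithBump ε a p.1 * ballWithBump ε a p.2 ∂μ.prod μ ≤
        (2 ^ l * μ.real (ball (0 : E) 1) * (μ.real (ball (0 : E) 1) + 2) + 1) * M := by
  have hM0 : 0 < M := one_pos.trans_le hM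
  set ε := M ^ (-l⁻¹) / 2
  have hε0 : 0 < ε := by positivity
  have hε1 : ε ≤ 1 := by
    have : M ^ (-l⁻¹) ≤ 1 := Real.rpow_le_one_of_one_le_of_nonpos hM (by simp [hl.le])
    show M ^ (-l⁻¹) / 2 ≤ 1
    linarith
  have hεM : (2 * ε) ^ l * M ^ 2 = M := by
    rw [mul_div_cancel₀ _ two_ne_zero, ← Real.rpow_mul hM0.le, neg_mul, inv_mul_cancel₀ hl.ne',
      Real.rpow_neg_one, sq, ← mul_assoc, inv_mul_cancel₀ hM0.ne', one_mul]
  have hbump := measureReal_ball_pos μ (E := E) hε0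
  set v := μ.real (ball (0 : E) 1)
  have hv : 0 ≤ v := measureReal_nonneg
  refine ⟨ε, M / μ.real (ball 0 ε), by positivity, hε1, ?_, ?_⟩
  · rw [integral_ballWithBump, div_mul_cancel₀ _ hbump.ne']
  refine (integral_interaction_ballWithBump_le μ hl.le (by positivity) hε1).trans ?_
  rw [div_mul_cancel₀ _ hbump.ne', hεM]
  have : 2 ^ l * v * v ≤ 2 ^ l * v * v * M := le_mul_of_one_le_right (by positivity) hM
  linarith

end BallWithBump

theorem stmt_10_general (N : ℕ) (l q : ℝ) (hl : 0 < l)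
    (hq0 : 0 < q) (hq : q < (N : ℝ) / (N + l)) :
    sInf {c : ℝ | ∃ ρ : EuclideanSpace ℝ (Fin N) → ℝ,
        (∀ x, 0 ≤ ρ x) ∧ Integrable ρ ∧ Integrable (fun x => ρ x ^ q) ∧
        Integrable (fun p : EuclideanSpace ℝ (Fin N) × EuclideanSpace ℝ (Fin N) =>
          ‖p.1 - p.2‖ ^ l * ρ p.1 * ρ p.2) ∧
        ¬ ρ =ᵐ[volume] 0 ∧
        c = (∫ p : EuclideanSpace ℝ (Fin N) × EuclideanSpace ℝ (Fin N),
              ‖p.1 - p.2‖ ^ l * ρ p.1 * ρ p.2) /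
            ((∫ x, ρ x) ^ ((2 * N - q * (2 * N + l)) / ((N : ℝ) * (1 - q))) *
              (∫ x, ρ x ^ q) ^
                ((2 - (2 * N - q * (2 * N + l)) / ((N : ℝ) * (1 - q))) / q))}
      = 0 := by
  obtain ⟨hα1, hα2⟩ := hls_exponent_mem_Ioo N.cast_nonneg hl hq0 hq
  have hq1 : q ≤ 1 := (hq.trans ((div_lt_one (by positivity)).2 (by linarith))).le
  set α := (2 * N - q * (2 * N + l)) / ((N : ℝ) * (1 - q))
  have hβ : 0 ≤ (2 - α) / q := div_nonneg (by linarith) hq0.le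
  set v := (volume : Measure (EuclideanSpace ℝ (Fin N))).real (ball 0 1)
  have hv : 0 < v := measureReal_ball_pos _ one_pos
  refine sInf_eq_zero_of_forall_exists_le_mul_rpow_neg
    (C := (2 ^ l * v * (v + 2) + 1) / v ^ ((2 - α) / q)) ?_ (sub_pos.2 hα1) fun M hM => ?_
  · rintro c ⟨ρ, hρ0, -, -, -, -, rfl⟩
    exact div_nonneg (integral_nonneg (norm_sub_rpow_mul_mul_nonneg hρ0 l)) (mul_nonneg
      (Real.rpow_nonneg (integral_nonneg hρ0) _)
      (Real.rpow_nonneg (integral_nonneg fun x => Real.rpow_nonneg (hρ0 x) q) _))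
  obtain ⟨ε, a, ha, hε, hmass, hI⟩ :=
    exists_ballWithBump_interaction_le (volume : Measure (EuclideanSpace ℝ (Fin N))) hl hM
  refine ⟨_, ⟨ballWithBump ε a, ballWithBump_nonneg ha, integrable_ballWithBump _,
    integrable_ballWithBump_rpow _ ha hε hq0 hq1, integrable_interaction_ballWithBump _ hl.le ha hε,
    not_ballWithBump_ae_eq_zero _ ha, rfl⟩, ?_⟩
  rw [hmass]
  exact div_add_rpow_mul_rpow_le
    (integral_nonneg (norm_sub_rpow_mul_mul_nonneg (ballWithBump_nonneg ha) l)) hI hv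
    (one_pos.trans_le hM) (measureReal_ball_le_integral_ballWithBump_rpow _ ha hε hq0 hq1)
    (by linarith) hβ

theorem stmt_10 (N : ℕ) (hN : 1 ≤ N) (l q : ℝ) (hl : 0 < l)
    (hq0 : 0 < q) (hq : q < (N : ℝ) / (N + l)) :
    sInf {c : ℝ | ∃ ρ : EuclideanSpace ℝ (Fin N) → ℝ,
        (∀ x, 0 ≤ ρ x) ∧ Integrable ρ ∧ Integrable (fun x => ρ x ^ q) ∧
        Integrable (fun p : EuclideanSpace ℝ (Fin N) × EuclideanSpace ℝ (Fin N) =>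
          ‖p.1 - p.2‖ ^ l * ρ p.1 * ρ p.2) ∧
        ¬ ρ =ᵐ[volume] 0 ∧
        c = (∫ p : EuclideanSpace ℝ (Fin N) × EuclideanSpace ℝ (Fin N),
              ‖p.1 - p.2‖ ^ l * ρ p.1 * ρ p.2) /
            ((∫ x, ρ x) ^ ((2 * N - q * (2 * N + l)) / ((N : ℝ) * (1 - q))) *
              (∫ x, ρ x ^ q) ^
                ((2 - (2 * N - q * (2 * N + l)) / ((N : ℝ) * (1 - q))) / q))}
      = 0 :=
  stmt_10_general N l q hl hq0 hq
end

section
/- Critical case of the reverse HLS inequality: if λ > 0 and q = N/(N+λ), then for ρ_R(x) := |x|^{−(N+λ)} 𝟙_{1≤|x|≤R}(x), R > 1, one has ∫_{ℝ^N} |x|^λ ρ_R dx = ∫_{ℝ^N} ρ_R^q dx = |𝕊^{N−1}| log R, and consequently (∫|x|^λ ρ_R dx)/(∫ρ_R^{N/(N+λ)} dx)^{(N+λ)/N} = (|𝕊^{N−1}| log R)^{−λ/N} → 0 as R → ∞. -/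
open MeasureTheory Real Filter

/-!
On the annulus `1 ≤ ‖x‖ ≤ R` both `‖x‖ ^ l * ρ_R` and `ρ_R ^ (N / (N + l))` equal `‖x‖ ^ (-N)`,
whose integral in polar coordinates is `N · |B₁| · ∫₁ᴿ dr / r = |𝕊^{N-1}| log R`. The ratio is then
`A ^ (1 - (N + l) / N) = A ^ (-(l / N))` with `A = |𝕊^{N-1}| log R → ∞`.
-/

open Set in
theorem integral_Ioi_pow_mul_indicator_Icc_rpow_neg {n : ℕ} (hn : n ≠ 0) {a b : ℝ}
    (ha : 0 < a) (hab : a ≤ b) :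
    ∫ y in Ioi (0 : ℝ), y ^ (n - 1) • (Icc a b).indicator (fun r => r ^ (-(n : ℝ))) y
      = log (b / a) := by
  have hIcc : Ioi 0 ∩ Icc a b = Icc a b :=
    inter_eq_right.mpr fun y hy => ha.trans_le hy.1
  have hinv : EqOn (fun y : ℝ => y ^ (n - 1) • y ^ (-(n : ℝ))) (fun y => y⁻¹) (Icc a b) := by
    intro y hy
    dsimp only
    rw [smul_eq_mul, ← rpow_natCast, ← rpow_add (ha.trans_le hy.1),
      Nat.cast_sub (Nat.one_le_iff_ne_zero.mpr hn), ← rpow_neg_one]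
    congr 1; ring
  simp_rw [← indicator_smul_apply (Icc a b) (fun y : ℝ => y ^ (n - 1))]
  rw [setIntegral_indicator measurableSet_Icc, hIcc, setIntegral_congr_fun measurableSet_Icc hinv,
    integral_Icc_eq_integral_Ioc, ← intervalIntegral.integral_of_le hab,
    integral_inv_of_pos ha (ha.trans_le hab)]

theorem integral_indicator_annulus_norm_rpow_neg_finrank {E : Type*} [NormedAddCommGroup E]
    [NormedSpace ℝ E] [Nontrivial E] [FiniteDimensional ℝ E] [MeasurableSpace E] [BorelSpace E]
    (μ : Measure E) [μ.IsAddHaarMeasure] {a b : ℝ} (ha : 0 < a) (hab : a ≤ b) :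
    ∫ x, {x : E | a ≤ ‖x‖ ∧ ‖x‖ ≤ b}.indicator
        (fun x => ‖x‖ ^ (-(Module.finrank ℝ E : ℝ))) x ∂μ
      = Module.finrank ℝ E * μ.real (Metric.ball 0 1) * log (b / a) := by
  change ∫ x, (Set.Icc a b).indicator (fun r => r ^ (-(Module.finrank ℝ E : ℝ))) ‖x‖ ∂μ = _
  rw [integral_fun_norm_addHaar, integral_Ioi_pow_mul_indicator_Icc_rpow_neg
    Module.finrank_pos.ne' ha hab, nsmul_eq_mul, smul_eq_mul, mul_assoc]

theorem norm_rpow_mul_indicator_norm_rpow {E : Type*} [NormedAddCommGroup E] (s : Set E)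
    {p q : ℝ} (hpq : p + q ≠ 0) (x : E) :
    ‖x‖ ^ p * s.indicator (fun x => ‖x‖ ^ q) x = s.indicator (fun x => ‖x‖ ^ (p + q)) x := by
  simp_rw [← Set.indicator_mul_right s (fun x => ‖x‖ ^ p), rpow_add' (norm_nonneg _) hpq]

theorem indicator_norm_rpow_rpow {E : Type*} [NormedAddCommGroup E] (s : Set E)
    {p q : ℝ} (hp : p ≠ 0) (x : E) :
    s.indicator (fun x => ‖x‖ ^ q) x ^ p = s.indicator (fun x => ‖x‖ ^ (q * p)) x := by
  simp_rw [rpow_mul (norm_nonneg _)]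
  exact (congrFun (Set.indicator_comp_of_zero (g := fun t : ℝ => t ^ p) (zero_rpow hp)) x).symm

theorem self_div_rpow_add_div_self {A n l : ℝ} (hA : 0 < A) (hn : n ≠ 0) :
    A / A ^ ((n + l) / n) = A ^ (-(l / n)) := by
  have hexp : 1 - (n + l) / n = -(l / n) := by field_simp; ring
  rw [← hexp, rpow_sub hA, rpow_one]

theorem stmt_11 (N : ℕ) (hN : 1 ≤ N) (l : ℝ) (hl : 0 < l)
    (S : ℝ) (hS : S = N * (volume (Metric.ball (0 : EuclideanSpace ℝ (Fin N)) 1)).toReal)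
    (ρ : ℝ → EuclideanSpace ℝ (Fin N) → ℝ)
    (hρ : ∀ R, ρ R = Set.indicator {x : EuclideanSpace ℝ (Fin N) | 1 ≤ ‖x‖ ∧ ‖x‖ ≤ R}
      (fun x => ‖x‖ ^ (-((N : ℝ) + l)))) :
    (∀ R > (1 : ℝ),
      (∫ x, ‖x‖ ^ l * ρ R x) = S * Real.log R ∧
      (∫ x, ρ R x ^ ((N : ℝ) / (N + l))) = S * Real.log R ∧
      (∫ x, ‖x‖ ^ l * ρ R x) /
          (∫ x, ρ R x ^ ((N : ℝ) / (N + l))) ^ (((N : ℝ) + l) / N)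
        = (S * Real.log R) ^ (-(l / N))) ∧
    Tendsto (fun R => (∫ x, ‖x‖ ^ l * ρ R x) /
        (∫ x, ρ R x ^ ((N : ℝ) / (N + l))) ^ (((N : ℝ) + l) / N))
      atTop (nhds 0) := by
  have : Nonempty (Fin N) := ⟨⟨0, hN⟩⟩
  have hN0 : (0 : ℝ) < N := by exact_mod_cast hN
  have hS0 : 0 < S := hS ▸ mul_pos hN0
    (ENNReal.toReal_pos (Metric.measure_ball_pos _ _ one_pos).ne' measure_ball_lt_top.ne)
  have hmain : ∀ R > (1 : ℝ),
      (∫ x, ‖x‖ ^ l * ρ R x) = S * log R ∧ (∫ x, ρ R x ^ ((N : ℝ) / (N + l))) = S * log R := by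
    intro R hR
    have hannulus := integral_indicator_annulus_norm_rpow_neg_finrank
      (volume : Measure (EuclideanSpace ℝ (Fin N))) one_pos hR.le
    rw [finrank_euclideanSpace_fin, div_one, measureReal_def] at hannulus
    have hexp₁ : l + -((N : ℝ) + l) = -N := by ring
    have hexp₂ : -((N : ℝ) + l) * (N / (N + l)) = -N := by field_simp
    rw [hρ, hS]
    constructor
    · simp_rw [norm_rpow_mul_indicator_norm_rpow _ (hexp₁ ▸ neg_ne_zero.mpr hN0.ne'), hexp₁]
      exact hannulus
    · simp_rw [indicator_norm_rpow_rpow _ (by positivity : (N : ℝ) / (N + l) ≠ 0), hexp₂]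
      exact hannulus
  have hratio : ∀ R > (1 : ℝ), (∫ x, ‖x‖ ^ l * ρ R x) /
      (∫ x, ρ R x ^ ((N : ℝ) / (N + l))) ^ (((N : ℝ) + l) / N) = (S * log R) ^ (-(l / N)) := by
    intro R hR
    rw [(hmain R hR).1, (hmain R hR).2]
    exact self_div_rpow_add_div_self (mul_pos hS0 (log_pos hR)) hN0.ne'
  refine ⟨fun R hR => ⟨(hmain R hR).1, (hmain R hR).2, hratio R hR⟩, ?_⟩
  rw [tendsto_congr' (eventually_gt_atTop 1 |>.mono hratio)]
  exact (tendsto_rpow_neg_atTop (div_pos hl hN0)).comp (tendsto_log_atTop.const_mul_atTop hS0)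
end

section
/- Jensen lower bound for the interaction of uniform balls: for N ≥ 2 and λ > 2, ∬_{B₁×B₁} |x−y|^λ dx dy ≥ ∬_{B₁×B₁} (|x|² + |y|²)^{λ/2} dx dy, where B₁ is the unit ball in ℝ^N. -/
/-!
By the parallelogram law, `‖x‖² + ‖y‖² = (‖x - y‖² + ‖x + y‖²) / 2`, so convexity of
`t ↦ t ^ (l / 2)` gives `(‖x‖² + ‖y‖²) ^ (l / 2) ≤ (‖x - y‖ ^ l + ‖x + y‖ ^ l) / 2`.
Integrating in `y` over a set invariant under `y ↦ -y` turns the right-hand side into the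
integral of `‖x - y‖ ^ l`.
-/

open MeasureTheory Metric Set Bornology

lemma rpow_sq_add_sq_div_two_le {l : ℝ} (hl : 2 ≤ l) {u v : ℝ} (hu : 0 ≤ u) (hv : 0 ≤ v) :
    ((u ^ 2 + v ^ 2) / 2) ^ (l / 2) ≤ (u ^ l + v ^ l) / 2 := by
  have hsq : ∀ {t : ℝ}, 0 ≤ t → (t ^ 2) ^ (l / 2) = t ^ l := fun ht => by
    rw [← Real.rpow_natCast, ← Real.rpow_mul ht]; congr 1; ring
  have h := (convexOn_rpow (by linarith : 1 ≤ l / 2)).2 (sq_nonneg u) (sq_nonneg v)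
    (by norm_num : (0 : ℝ) ≤ 1 / 2) (by norm_num : (0 : ℝ) ≤ 1 / 2) (by norm_num)
  simp only [smul_eq_mul, hsq hu, hsq hv] at h
  calc ((u ^ 2 + v ^ 2) / 2) ^ (l / 2) = (1 / 2 * u ^ 2 + 1 / 2 * v ^ 2) ^ (l / 2) := by ring_nf
    _ ≤ 1 / 2 * u ^ l + 1 / 2 * v ^ l := h
    _ = (u ^ l + v ^ l) / 2 := by ring

lemma rpow_norm_sq_add_norm_sq_le {E : Type*} [NormedAddCommGroup E] [InnerProductSpace ℝ E]
    {l : ℝ} (hl : 2 ≤ l) (x y : E) :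
    (‖x‖ ^ 2 + ‖y‖ ^ 2) ^ (l / 2) ≤ (‖x - y‖ ^ l + ‖x + y‖ ^ l) / 2 := by
  have parallelogram : ‖x‖ ^ 2 + ‖y‖ ^ 2 = (‖x - y‖ ^ 2 + ‖x + y‖ ^ 2) / 2 := by
    linarith [parallelogram_law_with_norm ℝ x y]
  rw [parallelogram]
  exact rpow_sq_add_sq_div_two_le hl (norm_nonneg _) (norm_nonneg _)

lemma setIntegral_comp_neg {G F : Type*} [MeasurableSpace G] [InvolutiveNeg G] [MeasurableNeg G]
    [NormedAddCommGroup F] [NormedSpace ℝ F] {μ : Measure G} [μ.IsNegInvariant] {s : Set G}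
    (hs : -s = s) (f : G → F) : ∫ y in s, f (-y) ∂μ = ∫ y in s, f y ∂μ := by
  have h := (Measure.measurePreserving_neg μ).setIntegral_preimage_emb measurableEmbedding_neg f s
  rwa [Set.neg_preimage, hs] at h

lemma Continuous.integrableOn_of_isBounded {X : Type*} [MetricSpace X] [ProperSpace X]
    [MeasurableSpace X] [OpensMeasurableSpace X] {μ : Measure X} [IsFiniteMeasureOnCompacts μ]
    {f : X → ℝ} (hf : Continuous f) {s : Set X} (hs : IsBounded s) : IntegrableOn f s μ :=
  (hf.continuousOn.integrableOn_compact hs.isCompact_closure).mono_set subset_closure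

section SymmetricSet

variable {E : Type*} [NormedAddCommGroup E] [InnerProductSpace ℝ E] [ProperSpace E]
  [MeasurableSpace E] [BorelSpace E] {μ : Measure E} [IsFiniteMeasureOnCompacts μ]
  [μ.IsNegInvariant] {s : Set E} {l : ℝ}

lemma setIntegral_rpow_norm_sq_add_norm_sq_le (hs : IsBounded s) (hs_neg : -s = s) (hl : 2 ≤ l)
    (x : E) :
    ∫ y in s, (‖x‖ ^ 2 + ‖y‖ ^ 2) ^ (l / 2) ∂μ ≤ ∫ y in s, ‖x - y‖ ^ l ∂μ := by
  have hl0 : 0 ≤ l := by linarith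
  have hl2 : 0 ≤ l / 2 := by linarith
  have int_sub : IntegrableOn (fun y => ‖x - y‖ ^ l) s μ :=
    (by fun_prop : Continuous fun y => ‖x - y‖ ^ l).integrableOn_of_isBounded hs
  have int_add : IntegrableOn (fun y => ‖x + y‖ ^ l) s μ :=
    (by fun_prop : Continuous fun y => ‖x + y‖ ^ l).integrableOn_of_isBounded hs
  have int_lhs : IntegrableOn (fun y => (‖x‖ ^ 2 + ‖y‖ ^ 2) ^ (l / 2)) s μ :=
    (by fun_prop : Continuous fun y : E => (‖x‖ ^ 2 + ‖y‖ ^ 2) ^ (l / 2)).integrableOn_of_isBounded hs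
  calc ∫ y in s, (‖x‖ ^ 2 + ‖y‖ ^ 2) ^ (l / 2) ∂μ
      ≤ ∫ y in s, (‖x - y‖ ^ l + ‖x + y‖ ^ l) / 2 ∂μ :=
        setIntegral_mono int_lhs ((int_sub.add int_add).div_const 2)
          (rpow_norm_sq_add_norm_sq_le hl x)
    _ = ((∫ y in s, ‖x - y‖ ^ l ∂μ) + ∫ y in s, ‖x + y‖ ^ l ∂μ) / 2 := by
        rw [integral_div, integral_add int_sub int_add]
    _ = ∫ y in s, ‖x - y‖ ^ l ∂μ := by
        rw [← setIntegral_comp_neg hs_neg (fun y => ‖x + y‖ ^ l)]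
        simp only [← sub_eq_add_neg]
        ring

lemma setIntegral_setIntegral_rpow_norm_sq_add_norm_sq_le (hs : IsBounded s) (hs_neg : -s = s)
    (hl : 2 ≤ l) :
    ∫ x in s, ∫ y in s, (‖x‖ ^ 2 + ‖y‖ ^ 2) ^ (l / 2) ∂μ ∂μ ≤
      ∫ x in s, ∫ y in s, ‖x - y‖ ^ l ∂μ ∂μ := by
  have hl0 : 0 ≤ l := by linarith
  have hl2 : 0 ≤ l / 2 := by linarith
  have integrable_of_continuous {F : E × E → ℝ} (hF : Continuous F) :
      Integrable F ((μ.restrict s).prod (μ.restrict s)) := by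
    rw [Measure.prod_restrict]
    exact hF.integrableOn_of_isBounded (hs.prod hs)
  refine setIntegral_mono ?_ ?_ (setIntegral_rpow_norm_sq_add_norm_sq_le hs hs_neg hl)
  · exact (integrable_of_continuous (F := fun p => (‖p.1‖ ^ 2 + ‖p.2‖ ^ 2) ^ (l / 2))
      (by fun_prop)).integral_prod_left
  · exact (integrable_of_continuous (F := fun p => ‖p.1 - p.2‖ ^ l)
      (by fun_prop)).integral_prod_left

end SymmetricSet

theorem stmt_19_general (N : ℕ) (l : ℝ) (hl : 2 < l) :
    (∫ x in Metric.ball (0 : EuclideanSpace ℝ (Fin N)) 1,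
        ∫ y in Metric.ball (0 : EuclideanSpace ℝ (Fin N)) 1,
          (‖x‖ ^ 2 + ‖y‖ ^ 2) ^ (l / 2)) ≤
      ∫ x in Metric.ball (0 : EuclideanSpace ℝ (Fin N)) 1,
        ∫ y in Metric.ball (0 : EuclideanSpace ℝ (Fin N)) 1, ‖x - y‖ ^ l :=
  setIntegral_setIntegral_rpow_norm_sq_add_norm_sq_le isBounded_ball (by rw [neg_ball, neg_zero])
    hl.le

theorem stmt_19 (N : ℕ) (hN : 2 ≤ N) (l : ℝ) (hl : 2 < l) :
    (∫ x in Metric.ball (0 : EuclideanSpace ℝ (Fin N)) 1,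
        ∫ y in Metric.ball (0 : EuclideanSpace ℝ (Fin N)) 1,
          (‖x‖ ^ 2 + ‖y‖ ^ 2) ^ (l / 2)) ≤
      ∫ x in Metric.ball (0 : EuclideanSpace ℝ (Fin N)) 1,
        ∫ y in Metric.ball (0 : EuclideanSpace ℝ (Fin N)) 1, ‖x - y‖ ^ l :=
  stmt_19_general N l hl
end
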